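/- arXiv:1001.5079 — 11 statements merged into one kernel-verified Lean document; each statement's English description precedes it below -/
import Mathlib

section
/- Let m ≥ 1 and let 1 ≤ n_1 < n_2 < ... < n_m be positive integers. Define d_j = ∏_{i≠j} n_i/(n_i - n_j) for j = 1,...,m. Then the finitely supported sequence g with g = Δ^{-m}(δ^{(0)} - ∑_j d_j δ^{(n_j)}) (i.e., the unique finitely supported g with Δ^m g = δ^{(0)} - h where h = ∑_j d_j δ^{(n_j)}) satisfies ‖g‖_{ℓ^1} = (∏_{j=1}^m n_j)/m!. -/
/-!
With nodes `0 < n₁ < ⋯ < n_m` and `P = ∏ nⱼ`, the sequence `g` is `P` times the discrete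
B-spline of degree `m - 1` with knots `0, n₁, …, n_m`: the divided difference, over the knots, of
the truncated binomial kernel `t ↦ C(k - t + m - 1, m - 1)₊`. Each kernel has `m`-th difference
`δ^{(t)}`, and the divided-difference weights at the knots, multiplied by `(-1)^m P`, are `1` at `0`
and `-dⱼ` at `nⱼ`; this identifies `g` by uniqueness of finitely supported solutions. A discrete
de Boor–Cox recursion shows the B-spline is nonnegative, so `‖g‖₁ = ∑ g`. The sum telescopes to
the B-spline of one degree higher evaluated to the right of the knots, where the kernel is a
polynomial in `t` of degree `m` and the divided difference is its leading coefficient `(-1)^m / m!`.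
-/

open Finset

/-- Backward finite difference on sequences indexed by ℤ. -/
noncomputable def bdiff (w : ℤ → ℝ) : ℤ → ℝ := fun n => w n - w (n - 1)

/-- Kronecker delta sequence supported at `k`. -/
noncomputable def kdelta (k : ℤ) : ℤ → ℝ := fun n => if n = k then 1 else 0

open Polynomial Function

noncomputable section

def bdiffLinearMap : Module.End ℝ (ℤ → ℝ) where
  toFun := bdiff
  map_add' u v := by ext k; simp only [bdiff, Pi.add_apply]; ring
  map_smul' c u := by ext k; simp only [bdiff, Pi.smul_apply, smul_eq_mul, RingHom.id_apply]; ring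

lemma coe_bdiffLinearMap_pow (r : ℕ) : ⇑(bdiffLinearMap ^ r) = bdiff^[r] :=
  Module.End.coe_pow _ r

lemma iterate_bdiff_const_mul (r : ℕ) (c : ℝ) (w : ℤ → ℝ) :
    bdiff^[r] (fun k => c * w k) = fun k => c * bdiff^[r] w k := by
  rw [← coe_bdiffLinearMap_pow]
  exact map_smul (bdiffLinearMap ^ r) c w

lemma support_bdiff_finite {w : ℤ → ℝ} (hw : (support w).Finite) :
    (support (bdiff w)).Finite := by
  refine (hw.union (hw.image (· + 1))).subset fun k hk => ?_
  by_cases hwk : w k = 0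
  · refine Or.inr ⟨k - 1, fun h => hk ?_, sub_add_cancel k 1⟩
    simp only [bdiff, hwk, h, sub_self]
  · exact Or.inl hwk

lemma eq_zero_of_bdiff_eq_zero {w : ℤ → ℝ} (hw : (support w).Finite) (h : bdiff w = 0) :
    w = 0 := by
  have hstep : ∀ k, w k = w (k - 1) := fun k => sub_eq_zero.mp (congrFun h k)
  have hconst : ∀ k, w k = w 0 := by
    intro k
    induction k using Int.induction_on with
    | zero => rfl
    | succ i ih => rw [hstep, add_sub_cancel_right, ih]
    | pred i ih => rw [← ih, hstep (-i)]
  ext k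
  by_contra hk
  refine Set.infinite_univ (hw.subset fun j _ => ?_)
  rw [mem_support, hconst j, ← hconst k]
  exact hk

lemma eq_zero_of_iterate_bdiff_eq_zero (r : ℕ) {w : ℤ → ℝ} (hw : (support w).Finite)
    (h : bdiff^[r] w = 0) : w = 0 := by
  induction r generalizing w with
  | zero => exact h
  | succ r ih => exact eq_zero_of_bdiff_eq_zero hw (ih (support_bdiff_finite hw) h)

lemma eq_of_iterate_bdiff_eq {r : ℕ} {u v : ℤ → ℝ} (hu : (support u).Finite)
    (hv : (support v).Finite) (h : bdiff^[r] u = bdiff^[r] v) : u = v := by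
  refine sub_eq_zero.mp (eq_zero_of_iterate_bdiff_eq_zero r ((hu.union hv).subset
    (support_sub u v)) ?_)
  rw [← coe_bdiffLinearMap_pow, map_sub, coe_bdiffLinearMap_pow, h, sub_self]

lemma sum_Icc_bdiff (H : ℤ → ℝ) {a c : ℤ} (hac : a - 1 ≤ c) :
    ∑ k ∈ Icc a c, bdiff H k = H c - H (a - 1) := by
  induction c, hac using Int.leInduction with
  | base => simp
  | succ c hc ih =>
    have hIcc : Icc a (c + 1) = insert (c + 1) (Icc a c) := by ext; simp; omega
    rw [hIcc, sum_insert (by simp), ih, bdiff, add_sub_cancel_right]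
    ring

lemma finsum_bdiff_eq {H : ℤ → ℝ} {a b : ℤ} {L : ℝ} (hlo : ∀ k < a, H k = 0)
    (hhi : ∀ k, b ≤ k → H k = L) : ∑ᶠ k, bdiff H k = L := by
  have hsupp : support (bdiff H) ⊆ Icc a (max a b) := by
    intro k hk
    rw [mem_support] at hk
    simp only [coe_Icc, Set.mem_Icc]
    by_contra hout
    refine hk ?_
    rcases not_and_or.mp hout with hk' | hk'
    · rw [bdiff, hlo k (by omega), hlo (k - 1) (by omega), sub_self]
    · rw [bdiff, hhi k (by omega), hhi (k - 1) (by omega), sub_self]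
  rw [finsum_eq_sum_of_support_subset _ hsupp, sum_Icc_bdiff H (by omega),
    hhi _ (le_max_right a b), hlo _ (by omega), sub_zero]

section DividedDifference

variable {F ι : Type*} [Field F] [DecidableEq ι]

def divDiff (s : Finset ι) (v y : ι → F) : F :=
  ∑ i ∈ s, y i / ∏ j ∈ s.erase i, (v i - v j)

lemma divDiff_congr {s : Finset ι} {v y z : ι → F} (h : ∀ i ∈ s, y i = z i) :
    divDiff s v y = divDiff s v z :=
  sum_congr rfl fun i hi => by rw [h i hi]

lemma divDiff_singleton (i : ι) (v y : ι → F) : divDiff {i} v y = y i := by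
  simp [divDiff]

lemma divDiff_sub (s : Finset ι) (v y z : ι → F) :
    divDiff s v (fun i => y i - z i) = divDiff s v y - divDiff s v z := by
  simp only [divDiff, sub_div, sum_sub_distrib]

lemma divDiff_const_mul (s : Finset ι) (v y : ι → F) (c : F) :
    divDiff s v (fun i => c * y i) = c * divDiff s v y := by
  simp only [divDiff, mul_sum, mul_div_assoc]

lemma divDiff_eval {s : Finset ι} {v : ι → F} (hv : Set.InjOn v s) {P : F[X]}
    (hP : P.degree < #s) : divDiff s v (fun i => P.eval (v i)) = P.coeff (#s - 1) :=
  (Lagrange.coeff_eq_sum hv hP).symm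

lemma divDiff_mul_sub_node {s : Finset ι} {v : ι → F} (hv : Set.InjOn v s) {a : ι}
    (ha : a ∈ s) (y : ι → F) :
    divDiff s v (fun i => (v i - v a) * y i) = divDiff (s.erase a) v y := by
  rw [divDiff, ← add_sum_erase s _ ha, sub_self, zero_mul, zero_div, zero_add, divDiff]
  refine sum_congr rfl fun i hi => ?_
  obtain ⟨hia, his⟩ := mem_erase.mp hi
  have hsub : v i - v a ≠ 0 := sub_ne_zero.mpr fun h => hia (hv his ha h)
  rw [erase_right_comm, ← mul_prod_erase (s.erase i) (fun j => v i - v j)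
    (mem_erase.mpr ⟨Ne.symm hia, ha⟩), mul_div_mul_left _ _ hsub]

lemma sub_mul_divDiff {s : Finset ι} {v : ι → F} (hv : Set.InjOn v s) {a b : ι}
    (ha : a ∈ s) (hb : b ∈ s) (y : ι → F) :
    (v b - v a) * divDiff s v y = divDiff (s.erase a) v y - divDiff (s.erase b) v y := by
  rw [← divDiff_mul_sub_node hv ha, ← divDiff_mul_sub_node hv hb, ← divDiff_sub,
    ← divDiff_const_mul]
  exact divDiff_congr fun i _ => by ring

lemma divDiff_insert {s : Finset ι} {a : ι} (ha : a ∉ s) (v y : ι → F) :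
    divDiff (insert a s) v y = y a / ∏ j ∈ s, (v a - v j)
      + ∑ i ∈ s, y i / ((v i - v a) * ∏ j ∈ s.erase i, (v i - v j)) := by
  rw [divDiff, sum_insert ha, erase_insert ha]
  congr 1
  refine sum_congr rfl fun i hi => ?_
  have hia : i ≠ a := ne_of_mem_of_not_mem hi ha
  rw [erase_insert_of_ne (Ne.symm hia), prod_insert fun h => ha (mem_of_mem_erase h)]

lemma iterate_bdiff_divDiff (r : ℕ) (s : Finset ι) (v : ι → ℝ) (G : ι → ℤ → ℝ) :
    bdiff^[r] (fun k => divDiff s v (fun i => G i k))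
      = fun k => divDiff s v (fun i => bdiff^[r] (G i) k) := by
  have hlin : ∀ H : ι → ℤ → ℝ, (fun k => divDiff s v (fun i => H i k))
      = ∑ i ∈ s, (∏ j ∈ s.erase i, (v i - v j))⁻¹ • H i := by
    intro H
    ext k
    simp only [divDiff, Finset.sum_apply, Pi.smul_apply, smul_eq_mul, div_eq_inv_mul]
  rw [hlin, hlin, ← coe_bdiffLinearMap_pow, map_sum]
  simp only [map_smul]

end DividedDifference

/-- `truncBinom p t k = C(k - t + p, p)` for `t ≤ k`, and `0` otherwise. -/
def truncBinom (p : ℕ) (t k : ℤ) : ℝ :=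
  if t ≤ k then (∏ r ∈ range p, ((k : ℝ) - t + 1 + r)) / p.factorial else 0

lemma truncBinom_of_lt {p : ℕ} {t k : ℤ} (h : k < t) : truncBinom p t k = 0 :=
  if_neg (not_le.mpr h)

lemma truncBinom_zero (t k : ℤ) : truncBinom 0 t k = if t ≤ k then 1 else 0 := by
  simp [truncBinom]

lemma truncBinom_self (p : ℕ) (t : ℤ) : truncBinom p t t = 1 := by
  have hprod : ∏ r ∈ range p, ((t : ℝ) - t + 1 + r) = p.factorial := by
    rw [← prod_range_add_one_eq_factorial, Nat.cast_prod]
    exact prod_congr rfl fun r _ => by push_cast; ring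
  rw [truncBinom, if_pos le_rfl, hprod, div_self (by positivity)]

lemma truncBinom_succ (p : ℕ) (t k : ℤ) :
    truncBinom (p + 1) t k = ((k : ℝ) + p + 1 - t) / (p + 1) * truncBinom p t k := by
  unfold truncBinom
  split_ifs
  · rw [prod_range_succ, Nat.factorial_succ]
    push_cast
    field_simp
    ring
  · rw [mul_zero]

lemma prod_add_one_sub_prod (c : ℝ) (p : ℕ) :
    ∏ r ∈ range (p + 1), (c + 1 + r) - ∏ r ∈ range (p + 1), (c + r)
      = (p + 1) * ∏ r ∈ range p, (c + 1 + r) := by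
  rw [prod_range_succ, prod_range_succ']
  have hshift : ∏ r ∈ range p, (c + ↑(r + 1)) = ∏ r ∈ range p, (c + 1 + r) :=
    prod_congr rfl fun r _ => by push_cast; ring
  rw [hshift]
  push_cast
  ring

lemma bdiff_truncBinom_succ (p : ℕ) (t : ℤ) :
    bdiff (truncBinom (p + 1) t) = truncBinom p t := by
  ext k
  rcases lt_trichotomy t k with htk | rfl | htk
  · have hshift : ∏ r ∈ range (p + 1), (((k - 1 : ℤ) : ℝ) - t + 1 + r)
        = ∏ r ∈ range (p + 1), (((k : ℝ) - t) + r) :=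
      prod_congr rfl fun r _ => by push_cast; ring
    simp only [bdiff, truncBinom, if_pos htk.le, if_pos (show t ≤ k - 1 by omega), hshift,
      ← sub_div, prod_add_one_sub_prod, Nat.factorial_succ]
    push_cast
    field_simp
  · rw [bdiff, truncBinom_self, truncBinom_self, truncBinom_of_lt (by omega), sub_zero]
  · simp only [bdiff, truncBinom_of_lt htk, truncBinom_of_lt (show k - 1 < t by omega), sub_self]

lemma bdiff_truncBinom_zero (t : ℤ) : bdiff (truncBinom 0 t) = kdelta t := by
  ext k
  simp only [bdiff, truncBinom_zero, kdelta]
  split_ifs <;> first | omega | norm_num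

lemma iterate_bdiff_truncBinom (p : ℕ) (t : ℤ) : bdiff^[p + 1] (truncBinom p t) = kdelta t := by
  induction p with
  | zero => exact bdiff_truncBinom_zero t
  | succ p ih => rw [iterate_succ_apply, bdiff_truncBinom_succ, ih]

lemma truncBinom_eq_eval_nodal {p : ℕ} {t k : ℤ} (h : t ≤ k + p) :
    truncBinom p t k = (-1) ^ p / p.factorial
      * (Lagrange.nodal (range p) fun r => (k : ℝ) + 1 + r).eval (t : ℝ) := by
  have hneg : ∏ r ∈ range p, ((k : ℝ) - t + 1 + r)
      = (-1) ^ p * ∏ r ∈ range p, ((t : ℝ) - ((k : ℝ) + 1 + r)) := by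
    have := prod_neg (s := range p) fun r : ℕ => (t : ℝ) - ((k : ℝ) + 1 + r)
    rw [card_range] at this
    rw [← this]
    exact prod_congr rfl fun r _ => by ring
  rw [Lagrange.eval_nodal, truncBinom]
  split_ifs with htk
  · rw [hneg]
    ring
  · -- for `k < t ≤ k + p` the polynomial has a root at `t`, so the truncation is invisible
    have hmem : (t - k - 1).toNat ∈ range p := mem_range.mpr (by omega)
    have hroot : ((t - k - 1).toNat : ℝ) = t - k - 1 := by
      exact_mod_cast Int.toNat_of_nonneg (by omega)
    rw [prod_eq_zero hmem (by rw [hroot]; ring), mul_zero]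

section TruncBinomDivDiff

variable {S : Finset ℤ} {p : ℕ} {k : ℤ}

lemma divDiff_truncBinom (hp : p < #S) (hk : ∀ t ∈ S, t ≤ k + p) :
    divDiff S Int.cast (fun t => truncBinom p t k)
      = (-1) ^ p / p.factorial
        * (Lagrange.nodal (range p) fun r => (k : ℝ) + 1 + r).coeff (#S - 1) := by
  rw [divDiff_congr fun t ht => truncBinom_eq_eval_nodal (hk t ht), divDiff_const_mul,
    divDiff_eval Int.cast_injective.injOn]
  rw [Lagrange.degree_nodal, card_range]
  exact_mod_cast hp

lemma divDiff_truncBinom_of_card_eq (hS : #S = p + 1) (hk : ∀ t ∈ S, t ≤ k + p) :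
    divDiff S Int.cast (fun t => truncBinom p t k) = (-1) ^ p / p.factorial := by
  have hmonic :=
    (Lagrange.nodal_monic (s := range p) (v := fun r => (k : ℝ) + 1 + r)).coeff_natDegree
  rw [Lagrange.natDegree_nodal, card_range] at hmonic
  rw [divDiff_truncBinom (by omega) hk, hS, Nat.add_sub_cancel, hmonic, mul_one]

lemma divDiff_truncBinom_eq_zero (hS : p + 1 < #S) (hk : ∀ t ∈ S, t ≤ k + p) :
    divDiff S Int.cast (fun t => truncBinom p t k) = 0 := by
  rw [divDiff_truncBinom (by omega) hk, coeff_eq_zero_of_natDegree_lt, mul_zero]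
  rw [Lagrange.natDegree_nodal, card_range]
  omega

end TruncBinomDivDiff

/-- For `#S = p + 2` this is the discrete B-spline of degree `p` with knots `S`, signed so as to be
nonnegative. -/
def bspline (p : ℕ) (S : Finset ℤ) (k : ℤ) : ℝ :=
  (-1) ^ (#S + 1) * divDiff S Int.cast (fun t => truncBinom p t k)

section BSpline

variable {p : ℕ} {S : Finset ℤ}

lemma bspline_eq_zero_of_lt {k : ℤ} (hk : ∀ t ∈ S, k < t) : bspline p S k = 0 := by
  rw [bspline, divDiff_congr fun t ht => truncBinom_of_lt (hk t ht)]
  simp [divDiff]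

lemma bspline_eq_zero_of_le {k : ℤ} (hS : p + 1 < #S) (hk : ∀ t ∈ S, t ≤ k + p) :
    bspline p S k = 0 := by
  rw [bspline, divDiff_truncBinom_eq_zero hS hk, mul_zero]

lemma bdiff_bspline_succ : bdiff (bspline (p + 1) S) = bspline p S := by
  ext k
  simp only [bdiff, bspline, ← mul_sub, ← divDiff_sub]
  congr 1
  exact divDiff_congr fun t _ => congrFun (bdiff_truncBinom_succ p t) k

lemma iterate_bdiff_bspline :
    bdiff^[p + 1] (bspline p S) = fun k => (-1) ^ (#S + 1) * divDiff S Int.cast (kdelta · k) := by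
  change bdiff^[p + 1] (fun k => _ * divDiff S Int.cast fun t => truncBinom p t k) = _
  rw [iterate_bdiff_const_mul, iterate_bdiff_divDiff _ _ _ (truncBinom p)]
  simp only [iterate_bdiff_truncBinom]

/-- The discrete de Boor–Cox recursion. -/
lemma mul_bspline_succ {a b : ℤ} (ha : a ∈ S) (hb : b ∈ S) (k : ℤ) :
    ((p : ℝ) + 1) * (b - a) * bspline (p + 1) S k
      = (b - k - p - 1) * bspline p (S.erase a) k
        + (k + p + 1 - a) * bspline p (S.erase b) k := by
  have hinj : Set.InjOn (Int.cast : ℤ → ℝ) S := Int.cast_injective.injOn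
  have hsucc : ((p : ℝ) + 1) * divDiff S Int.cast (fun t => truncBinom (p + 1) t k)
      = (k + p + 1 - a) * divDiff S Int.cast (fun t => truncBinom p t k)
        - divDiff (S.erase a) Int.cast (fun t => truncBinom p t k) := by
    rw [← divDiff_mul_sub_node hinj ha, ← divDiff_const_mul, ← divDiff_const_mul,
      ← divDiff_sub]
    refine divDiff_congr fun t _ => ?_
    rw [truncBinom_succ]
    field_simp
    ring
  have hsplit := sub_mul_divDiff hinj ha hb (fun t => truncBinom p t k)
  obtain ⟨c, hc⟩ := Nat.exists_eq_add_one.mpr (card_pos.mpr ⟨a, ha⟩)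
  simp only [bspline, card_erase_of_mem ha, card_erase_of_mem hb, hc, Nat.add_sub_cancel]
  linear_combination (-1) ^ c * (b - a) * hsucc + (-1) ^ c * (k + p + 1 - a) * hsplit

lemma sub_mul_bspline_zero_pair {a b : ℤ} (hab : a ≠ b) (k : ℤ) :
    ((b : ℝ) - a) * bspline 0 {a, b} k = truncBinom 0 a k - truncBinom 0 b k := by
  have hsplit := sub_mul_divDiff Int.cast_injective.injOn (mem_insert_self a {b})
    (mem_insert_of_mem (mem_singleton_self b)) (fun t => truncBinom 0 t k)
  rw [erase_insert (by simpa using hab), erase_insert_of_ne hab, erase_singleton, insert_empty,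
    divDiff_singleton, divDiff_singleton] at hsplit
  rw [bspline, card_pair hab]
  linear_combination -hsplit

lemma bspline_nonneg (hS : #S = p + 2) (k : ℤ) : 0 ≤ bspline p S k := by
  induction p generalizing S with
  | zero =>
    obtain ⟨a, b, hab, rfl⟩ := card_eq_two.mp hS
    wlog hlt : a < b generalizing a b
    · rw [pair_comm]
      exact this b a hab.symm (by rwa [pair_comm]) (lt_of_le_of_ne (not_lt.mp hlt) hab.symm)
    have hpos : (0 : ℝ) < b - a := sub_pos.mpr (Int.cast_lt.mpr hlt)
    refine nonneg_of_mul_nonneg_right ?_ hpos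
    rw [sub_mul_bspline_zero_pair hab, truncBinom_zero, truncBinom_zero]
    split_ifs <;> first | omega | norm_num
  | succ p ih =>
    have hne : S.Nonempty := card_pos.mp (by omega)
    have hcard : ∀ c ∈ S, #(S.erase c) = p + 2 := fun c hc => by
      rw [card_erase_of_mem hc, hS]; rfl
    by_cases hlo : k < S.min' hne
    · exact (bspline_eq_zero_of_lt fun t ht => hlo.trans_le (S.min'_le t ht)).ge
    by_cases hhi : S.max' hne ≤ k + (p + 1)
    · exact (bspline_eq_zero_of_le (by omega) fun t ht =>
        (S.le_max' t ht).trans (by push_cast; omega)).ge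
    have hlt : ((S.min' hne : ℤ) : ℝ) < S.max' hne :=
      Int.cast_lt.mpr (S.min'_lt_max'_of_card (by omega))
    have hrec := mul_bspline_succ (p := p) (S.min'_mem hne) (S.max'_mem hne) k
    refine nonneg_of_mul_nonneg_right (hrec ▸ add_nonneg
      (mul_nonneg ?_ (ih (hcard _ (S.min'_mem hne))))
      (mul_nonneg ?_ (ih (hcard _ (S.max'_mem hne))))) (by positivity)
    · have : (k : ℝ) + (p + 1) < S.max' hne := by exact_mod_cast (not_le.mp hhi)
      linarith
    · have : ((S.min' hne : ℤ) : ℝ) ≤ k := by exact_mod_cast (not_lt.mp hlo)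
      linarith

lemma bspline_support_finite (hS : #S = p + 2) : (support (bspline p S)).Finite := by
  have hne : S.Nonempty := card_pos.mp (by omega)
  refine (Set.finite_Icc (S.min' hne) (S.max' hne)).subset fun k hk => ?_
  by_contra hout
  rcases not_and_or.mp hout with hlo | hhi
  · exact hk (bspline_eq_zero_of_lt fun t ht => (not_le.mp hlo).trans_le (S.min'_le t ht))
  · exact hk (bspline_eq_zero_of_le (by omega) fun t ht =>
      (S.le_max' t ht).trans (by have := not_le.mp hhi; omega))

lemma finsum_bspline (hS : #S = p + 2) : ∑ᶠ k, bspline p S k = 1 / (p + 1).factorial := by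
  have hne : S.Nonempty := card_pos.mp (by omega)
  rw [← bdiff_bspline_succ]
  refine finsum_bdiff_eq (a := S.min' hne) (b := S.max' hne)
    (fun k hk => bspline_eq_zero_of_lt fun t ht => hk.trans_le (S.min'_le t ht)) fun k hk => ?_
  rw [bspline, divDiff_truncBinom_of_card_eq hS fun t ht => (S.le_max' t ht).trans (by omega),
    hS]
  rw [mul_div_assoc', ← pow_add, Even.neg_one_pow ⟨p + 2, by ring⟩]

end BSpline

section Nodes

variable {m : ℕ} {n : Fin m → ℕ}

lemma zero_notMem_image_natCast (hpos : ∀ j, 0 < n j) :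
    (0 : ℤ) ∉ univ.image fun j => (n j : ℤ) := by
  simp [(hpos _).ne']

lemma card_insert_zero_image (hn : Injective n) (hpos : ∀ j, 0 < n j) :
    #(insert (0 : ℤ) (univ.image fun j => (n j : ℤ))) = m + 1 := by
  have hinj : Injective fun j => (n j : ℤ) := Nat.cast_injective.comp hn
  rw [card_insert_of_notMem (zero_notMem_image_natCast hpos), card_image_of_injective _ hinj,
    card_univ, Fintype.card_fin]

lemma mul_divDiff_insert_zero_image (hn : Injective n) (hpos : ∀ j, 0 < n j) (y : ℤ → ℝ) :
    (-1) ^ m * (∏ j, (n j : ℝ))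
        * divDiff (insert 0 (univ.image fun j => (n j : ℤ))) Int.cast y
      = y 0 - ∑ j, (∏ i ∈ univ.erase j, (n i : ℝ) / (n i - n j)) * y (n j) := by
  have hinj : Injective fun j => (n j : ℤ) := Nat.cast_injective.comp hn
  rw [divDiff_insert (zero_notMem_image_natCast hpos), prod_image hinj.injOn,
    sum_image hinj.injOn, mul_add, mul_sum, sub_eq_add_neg, ← sum_neg_distrib]
  simp_rw [← image_erase hinj, prod_image hinj.injOn]
  have hP : ∏ j, (n j : ℝ) ≠ 0 :=
    prod_ne_zero_iff.mpr fun j _ => by have := hpos j; positivity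
  congr 1
  · have hprod : ∏ j, (((0 : ℤ) : ℝ) - ((n j : ℤ) : ℝ)) = (-1) ^ m * ∏ j, (n j : ℝ) := by
      simp [prod_neg]
    rw [hprod]
    field_simp
  · refine sum_congr rfl fun j _ => ?_
    have hsign : (-1 : ℝ) ^ m = (-1) ^ #(univ.erase j) * (-1) := by
      rw [← pow_succ, card_erase_add_one (mem_univ j), card_fin]
    have hnj : (n j : ℝ) ≠ 0 := by have := hpos j; positivity
    have hgap : ∏ i ∈ univ.erase j, ((n i : ℝ) - n j) ≠ 0 := prod_ne_zero_iff.mpr fun i hi =>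
      sub_ne_zero.mpr (Nat.cast_injective.ne (hn.ne (ne_of_mem_erase hi)))
    have hflip : ∏ i ∈ univ.erase j, (((n j : ℤ) : ℝ) - ((n i : ℤ) : ℝ))
        = (-1) ^ #(univ.erase j) * ∏ i ∈ univ.erase j, ((n i : ℝ) - n j) := by
      rw [← prod_neg]
      exact prod_congr rfl fun i _ => by push_cast; ring
    rw [hflip, ← mul_prod_erase univ (fun i => (n i : ℝ)) (mem_univ j), prod_div_distrib,
      hsign]
    push_cast
    field_simp
    ring

end Nodes

end

/-- if `h` is the minimally supported filter with coefficients
`d j = ∏_{i≠j} n i / (n i - n j)` at positions `n j`, and `g` is a finitely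
supported sequence with `Δ^m g = δ⁰ - h`, then `‖g‖₁ = (∏ n j) / m!`. -/
theorem stmt0 (m : ℕ) (hm : 1 ≤ m) (n : Fin m → ℕ)
    (hmono : StrictMono n) (hn1 : 1 ≤ n ⟨0, hm⟩)
    (d : Fin m → ℝ)
    (hd : ∀ j, d j = ∏ i ∈ univ.erase j, (n i : ℝ) / ((n i : ℝ) - (n j : ℝ)))
    (h : ℤ → ℝ)
    (hh : ∀ k : ℤ, h k = ∑ j, d j * (if k = (n j : ℤ) then 1 else 0))
    (g : ℤ → ℝ) (hgfin : (Function.support g).Finite)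
    (hg : bdiff^[m] g = fun k => kdelta 0 k - h k) :
    ∑ᶠ k : ℤ, |g k| = (∏ j, (n j : ℝ)) / (Nat.factorial m) := by
  obtain ⟨p, rfl⟩ : ∃ p, m = p + 1 := ⟨m - 1, by omega⟩
  have hpos : ∀ j, 0 < n j := fun j => hn1.trans (hmono.monotone (Nat.zero_le j.val))
  set S := insert (0 : ℤ) (univ.image fun j => (n j : ℤ))
  have hS : #S = p + 2 := card_insert_zero_image hmono.injective hpos
  set P := ∏ j, (n j : ℝ)
  have hgS : g = fun k => P * bspline p S k := by
    refine eq_of_iterate_bdiff_eq (r := p + 1) hgfin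
      ((bspline_support_finite hS).subset (support_mul_subset_right _ _)) ?_
    rw [hg, iterate_bdiff_const_mul, iterate_bdiff_bspline]
    ext k
    have hnodes := mul_divDiff_insert_zero_image hmono.injective hpos (kdelta · k)
    simp only [hh, hd, hS, kdelta] at hnodes ⊢
    linear_combination -hnodes
  subst hgS
  calc ∑ᶠ k, |P * bspline p S k| = ∑ᶠ k, P * bspline p S k :=
        finsum_congr fun k => abs_of_nonneg
          (mul_nonneg (prod_nonneg fun j _ => Nat.cast_nonneg _) (bspline_nonneg hS k))
    _ = P / (p + 1).factorial := by rw [← mul_finsum, finsum_bspline hS, mul_one_div]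
end

section
/- Let m ≥ 2 and let x_0 = 1 < x_1 < ... < x_{m-1} be real numbers. Define F as a function of the ratios r_j = x_j/x_{j-1} (j = 1, ..., m-1) by F(r) = ∑_{j=0}^{m-1} ∏_{i≠j} x_i/|x_i - x_j|. Then F(r) = ∑_{j=0}^{m-1} [∏_{i<j} 1/(r_{i+1}···r_j − 1)] · [∏_{i>j} 1/(1 − 1/(r_{j+1}···r_i))], and F is strictly decreasing in each variable r_j > 1. -/
open Finset

/-- The constraint functional `f(x) = ∑_{j<m} ∏_{i≠j} x i / |x i - x j|`. -/
noncomputable def constraintF (m : ℕ) (x : ℕ → ℝ) : ℝ :=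
  ∑ j ∈ range m, ∏ i ∈ (range m).erase j, x i / |x i - x j|

/-- `F` expressed in terms of the ratios `r`. -/
noncomputable def ratioF (m : ℕ) (r : ℕ → ℝ) : ℝ :=
  ∑ j ∈ range m,
    (∏ i ∈ range j, 1 / ((∏ k ∈ Icc (i + 1) j, r k) - 1)) *
    (∏ i ∈ Ioc j (m - 1), 1 / (1 - 1 / (∏ k ∈ Icc (j + 1) i, r k)))

/-!
With `x 0 = 1` and `r k = x k / x (k - 1)`, the product `r (i+1) ⋯ r j` telescopes to `x j / x i`,
so the factor `x i / |x i - x j|` of `f` is `1 / (t - 1)` for `i < j` and `1 / (1 - 1 / t)` for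
`i > j`, where `t > 1` is the corresponding product of ratios. Both functions are positive and
strictly decreasing on `t > 1`, and every such product is nondecreasing in each `r k`; raising
`r j₀` strictly raises the product `r 1 ⋯ r j₀` behind the factor `i = 0`, `j = j₀`, so `F`
strictly decreases.
-/

lemma prod_range_erase_eq_mul_prod_Ioc {M : Type*} [CommMonoid M] (f : ℕ → M) {m j : ℕ}
    (hj : j < m) :
    ∏ i ∈ (range m).erase j, f i = (∏ i ∈ range j, f i) * ∏ i ∈ Ioc j (m - 1), f i := by
  have hsplit : (range m).erase j = range j ∪ Ioc j (m - 1) := by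
    ext i
    simp only [mem_erase, mem_range, mem_union, mem_Ioc]
    omega
  have hdisj : Disjoint (range j) (Ioc j (m - 1)) :=
    disjoint_left.2 fun i hi hi' => by rw [mem_range] at hi; rw [mem_Ioc] at hi'; omega
  rw [hsplit, prod_union hdisj]

lemma prod_Icc_eq_div_of_ratio {x r : ℕ → ℝ} {n : ℕ} (hx : ∀ k ≤ n, x k ≠ 0)
    (hr : ∀ k ∈ Icc 1 n, r k = x k / x (k - 1)) {i j : ℕ} (hij : i ≤ j) (hj : j ≤ n) :
    ∏ k ∈ Icc (i + 1) j, r k = x j / x i := by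
  induction j, hij using Nat.le_induction with
  | base => rw [Icc_eq_empty (by omega), prod_empty, div_self (hx i hj)]
  | succ j hij ih =>
    rw [prod_Icc_succ_top (by omega), ih (by omega), hr (j + 1) (mem_Icc.2 ⟨by omega, hj⟩),
      Nat.add_sub_cancel, mul_comm, div_mul_div_cancel₀ (hx j (by omega))]

lemma div_abs_sub_eq_of_lt {a b : ℝ} (ha : 0 < a) (hab : a < b) :
    a / |a - b| = 1 / (b / a - 1) := by
  rw [div_sub_one ha.ne', one_div_div, abs_sub_comm, abs_of_pos (sub_pos.2 hab)]

lemma div_abs_sub_eq_of_gt {a b : ℝ} (hb : 0 < b) (hba : b < a) :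
    a / |a - b| = 1 / (1 - 1 / (a / b)) := by
  rw [one_div_div, one_sub_div (hb.trans hba).ne', one_div_div, abs_of_pos (sub_pos.2 hba)]

theorem constraintF_eq_ratioF {m : ℕ} {x r : ℕ → ℝ} (hx0 : 0 < x 0)
    (hx : StrictMonoOn x (Set.Iic (m - 1))) (hr : ∀ k ∈ Icc 1 (m - 1), r k = x k / x (k - 1)) :
    constraintF m x = ratioF m r := by
  have hpos : ∀ k ≤ m - 1, 0 < x k := fun k hk =>
    hx0.trans_le (hx.monotoneOn (Set.mem_Iic.2 (Nat.zero_le _)) hk (Nat.zero_le k))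
  have hne : ∀ k ≤ m - 1, x k ≠ 0 := fun k hk => (hpos k hk).ne'
  refine sum_congr rfl fun j hj => ?_
  have hjm : j ≤ m - 1 := by rw [mem_range] at hj; omega
  rw [prod_range_erase_eq_mul_prod_Ioc _ (mem_range.1 hj)]
  congr 1
  · refine prod_congr rfl fun i hi => ?_
    have hij : i < j := mem_range.1 hi
    rw [prod_Icc_eq_div_of_ratio hne hr hij.le hjm, div_abs_sub_eq_of_lt (hpos i (by omega))
      (hx (Set.mem_Iic.2 (by omega)) hjm hij)]
  · refine prod_congr rfl fun i hi => ?_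
    obtain ⟨hji, him⟩ := mem_Ioc.1 hi
    rw [prod_Icc_eq_div_of_ratio hne hr hji.le him,
      div_abs_sub_eq_of_gt (hpos j hjm) (hx hjm him hji)]

lemma one_lt_prod_of_one_lt {ι R : Type*} [CommSemiring R] [PartialOrder R]
    [IsStrictOrderedRing R] {s : Finset ι} {f : ι → R} (hf : ∀ i ∈ s, 1 < f i)
    (hs : s.Nonempty) : 1 < ∏ i ∈ s, f i := by
  simpa using prod_lt_prod_of_nonempty (fun _ _ => one_pos) hf hs

section RatioProducts

variable {s s' : ℕ → ℝ} {n a b : ℕ}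

lemma one_lt_prod_Icc (hs : ∀ k ∈ Icc 1 n, 1 < s k) (hab : a < b) (hb : b ≤ n) :
    1 < ∏ k ∈ Icc (a + 1) b, s k :=
  one_lt_prod_of_one_lt (fun k hk => hs k (Icc_subset_Icc (by omega) hb hk))
    (nonempty_Icc.2 (by omega))

lemma prod_Icc_le_prod_Icc (hs : ∀ k ∈ Icc 1 n, 1 < s k) (hle : ∀ k ∈ Icc 1 n, s k ≤ s' k)
    (hb : b ≤ n) : ∏ k ∈ Icc (a + 1) b, s k ≤ ∏ k ∈ Icc (a + 1) b, s' k := by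
  have hsub : Icc (a + 1) b ⊆ Icc 1 n := Icc_subset_Icc (by omega) hb
  exact prod_le_prod (fun k hk => zero_le_one.trans (hs k (hsub hk)).le)
    fun k hk => hle k (hsub hk)

lemma prod_Icc_lt_prod_Icc {j₀ : ℕ} (hs : ∀ k ∈ Icc 1 n, 1 < s k)
    (hle : ∀ k ∈ Icc 1 n, s k ≤ s' k) (haj₀ : a < j₀) (hj₀b : j₀ ≤ b) (hb : b ≤ n)
    (hlt : s j₀ < s' j₀) : ∏ k ∈ Icc (a + 1) b, s k < ∏ k ∈ Icc (a + 1) b, s' k := by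
  have hsub : Icc (a + 1) b ⊆ Icc 1 n := Icc_subset_Icc (by omega) hb
  exact prod_lt_prod (fun k hk => zero_lt_one.trans (hs k (hsub hk)))
    (fun k hk => hle k (hsub hk)) ⟨j₀, mem_Icc.2 ⟨haj₀, hj₀b⟩, hlt⟩

end RatioProducts

section AntitoneFactors

variable {ι : Type*} {φ : ℝ → ℝ} {s : Finset ι} {p p' : ι → ℝ}

lemma prod_comp_le_prod_comp (hφ : AntitoneOn φ (Set.Ioi 1))
    (hpos : ∀ t ∈ Set.Ioi (1 : ℝ), 0 < φ t) (hp : ∀ i ∈ s, 1 < p i)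
    (hle : ∀ i ∈ s, p i ≤ p' i) : ∏ i ∈ s, φ (p' i) ≤ ∏ i ∈ s, φ (p i) :=
  prod_le_prod (fun i hi => (hpos _ ((hp i hi).trans_le (hle i hi))).le)
    fun i hi => hφ (hp i hi) ((hp i hi).trans_le (hle i hi)) (hle i hi)

lemma prod_comp_lt_prod_comp (hφ : StrictAntiOn φ (Set.Ioi 1))
    (hpos : ∀ t ∈ Set.Ioi (1 : ℝ), 0 < φ t) (hp : ∀ i ∈ s, 1 < p i)
    (hle : ∀ i ∈ s, p i ≤ p' i) (hlt : ∃ i ∈ s, p i < p' i) :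
    ∏ i ∈ s, φ (p' i) < ∏ i ∈ s, φ (p i) := by
  obtain ⟨i₀, hi₀, hlt₀⟩ := hlt
  exact prod_lt_prod (fun i hi => hpos _ ((hp i hi).trans_le (hle i hi)))
    (fun i hi => hφ.antitoneOn (hp i hi) ((hp i hi).trans_le (hle i hi)) (hle i hi))
    ⟨i₀, hi₀, hφ (hp i₀ hi₀) ((hp i₀ hi₀).trans hlt₀) hlt₀⟩

end AntitoneFactors

lemma one_div_sub_one_pos {t : ℝ} (ht : t ∈ Set.Ioi 1) : 0 < 1 / (t - 1) :=
  one_div_pos.2 (sub_pos.2 ht)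

lemma strictAntiOn_one_div_sub_one : StrictAntiOn (fun t : ℝ => 1 / (t - 1)) (Set.Ioi 1) :=
  fun _ ha _ _ hab => one_div_lt_one_div_of_lt (sub_pos.2 ha) (by linarith)

lemma one_div_one_sub_one_div_pos {t : ℝ} (ht : t ∈ Set.Ioi 1) : 0 < 1 / (1 - 1 / t) :=
  one_div_pos.2 (sub_pos.2 ((div_lt_one (zero_lt_one.trans ht)).2 ht))

lemma strictAntiOn_one_div_one_sub_one_div :
    StrictAntiOn (fun t : ℝ => 1 / (1 - 1 / t)) (Set.Ioi 1) := by
  intro a ha b _ hab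
  have ha0 : (0 : ℝ) < a := zero_lt_one.trans ha
  exact one_div_lt_one_div_of_lt (sub_pos.2 ((div_lt_one ha0).2 ha))
    (sub_lt_sub_left (one_div_lt_one_div_of_lt ha0 hab) 1)

theorem ratioF_lt_ratioF {m j₀ : ℕ} {r r' : ℕ → ℝ} (hr : ∀ k ∈ Icc 1 (m - 1), 1 < r k)
    (hle : ∀ k ∈ Icc 1 (m - 1), r k ≤ r' k) (hj₀ : j₀ ∈ Icc 1 (m - 1))
    (hlt : r j₀ < r' j₀) : ratioF m r' < ratioF m r := by
  have hr' : ∀ k ∈ Icc 1 (m - 1), 1 < r' k := fun k hk => (hr k hk).trans_le (hle k hk)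
  obtain ⟨hj₀1, hj₀m⟩ := mem_Icc.1 hj₀
  have hLpos : ∀ j ≤ m - 1, 0 < ∏ i ∈ range j, 1 / ((∏ k ∈ Icc (i + 1) j, r k) - 1) :=
    fun j hj => prod_pos fun i hi => one_div_sub_one_pos (one_lt_prod_Icc hr (mem_range.1 hi) hj)
  have hRpos : ∀ j, 0 < ∏ i ∈ Ioc j (m - 1), 1 / (1 - 1 / ∏ k ∈ Icc (j + 1) i, r' k) :=
    fun j => prod_pos fun i hi => one_div_one_sub_one_div_pos
      (one_lt_prod_Icc hr' (mem_Ioc.1 hi).1 (mem_Ioc.1 hi).2)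
  have hL : ∀ j ≤ m - 1, ∏ i ∈ range j, 1 / ((∏ k ∈ Icc (i + 1) j, r' k) - 1) ≤
      ∏ i ∈ range j, 1 / ((∏ k ∈ Icc (i + 1) j, r k) - 1) := fun j hj =>
    prod_comp_le_prod_comp (φ := fun t => 1 / (t - 1)) strictAntiOn_one_div_sub_one.antitoneOn
      (fun _ => one_div_sub_one_pos) (fun i hi => one_lt_prod_Icc hr (mem_range.1 hi) hj)
      fun _ _ => prod_Icc_le_prod_Icc hr hle hj
  have hR : ∀ j, ∏ i ∈ Ioc j (m - 1), 1 / (1 - 1 / ∏ k ∈ Icc (j + 1) i, r' k) ≤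
      ∏ i ∈ Ioc j (m - 1), 1 / (1 - 1 / ∏ k ∈ Icc (j + 1) i, r k) := fun j =>
    prod_comp_le_prod_comp (φ := fun t => 1 / (1 - 1 / t))
      strictAntiOn_one_div_one_sub_one_div.antitoneOn
      (fun _ => one_div_one_sub_one_div_pos)
      (fun i hi => one_lt_prod_Icc hr (mem_Ioc.1 hi).1 (mem_Ioc.1 hi).2)
      fun i hi => prod_Icc_le_prod_Icc hr hle (mem_Ioc.1 hi).2
  have hL₀ : ∏ i ∈ range j₀, 1 / ((∏ k ∈ Icc (i + 1) j₀, r' k) - 1) <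
      ∏ i ∈ range j₀, 1 / ((∏ k ∈ Icc (i + 1) j₀, r k) - 1) :=
    prod_comp_lt_prod_comp (φ := fun t => 1 / (t - 1)) strictAntiOn_one_div_sub_one
      (fun _ => one_div_sub_one_pos) (fun i hi => one_lt_prod_Icc hr (mem_range.1 hi) hj₀m)
      (fun _ _ => prod_Icc_le_prod_Icc hr hle hj₀m)
      ⟨0, mem_range.2 hj₀1, prod_Icc_lt_prod_Icc hr hle hj₀1 le_rfl hj₀m hlt⟩
  refine sum_lt_sum (fun j hj => ?_) ⟨j₀, mem_range.2 (by omega), ?_⟩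
  · have hjm : j ≤ m - 1 := by rw [mem_range] at hj; omega
    exact mul_le_mul (hL j hjm) (hR j) (hRpos j).le (hLpos j hjm).le
  · exact mul_lt_mul hL₀ (hR j₀) (hRpos j₀) (hLpos j₀ hj₀m).le

theorem stmt1_general (m : ℕ) :
    (∀ x : ℕ → ℝ, x 0 = 1 → (∀ i j, i < j → j ≤ m - 1 → x i < x j) →
      ∀ r : ℕ → ℝ, (∀ j, 1 ≤ j → j ≤ m - 1 → r j = x j / x (j - 1)) →
      constraintF m x = ratioF m r) ∧
    (∀ r r' : ℕ → ℝ, (∀ j, 1 ≤ j → j ≤ m - 1 → 1 < r j) →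
      (∀ j, 1 ≤ j → j ≤ m - 1 → 1 < r' j) →
      ∀ j₀, 1 ≤ j₀ → j₀ ≤ m - 1 →
      (∀ j, 1 ≤ j → j ≤ m - 1 → j ≠ j₀ → r' j = r j) →
      r j₀ < r' j₀ →
      ratioF m r' < ratioF m r) := by
  constructor
  · intro x hx0 hx r hr
    exact constraintF_eq_ratioF (hx0 ▸ one_pos) (fun i _ j hj hij => hx i j hij hj)
      fun k hk => hr k (mem_Icc.1 hk).1 (mem_Icc.1 hk).2
  · intro r r' hr _ j₀ hj₀1 hj₀m hagree hlt
    refine ratioF_lt_ratioF (fun k hk => hr k (mem_Icc.1 hk).1 (mem_Icc.1 hk).2)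
      (fun k hk => ?_) (mem_Icc.2 ⟨hj₀1, hj₀m⟩) hlt
    obtain ⟨hk1, hkm⟩ := mem_Icc.1 hk
    rcases eq_or_ne k j₀ with rfl | hk
    · exact hlt.le
    · exact (hagree k hk1 hkm hk).ge

/-- `f(x) = F(r)` where `r j = x j / x (j-1)`, and `F` is strictly
decreasing in each variable `r j > 1`. -/
theorem stmt1 (m : ℕ) (hm : 2 ≤ m) :
    (∀ x : ℕ → ℝ, x 0 = 1 → (∀ i j, i < j → j ≤ m - 1 → x i < x j) →
      ∀ r : ℕ → ℝ, (∀ j, 1 ≤ j → j ≤ m - 1 → r j = x j / x (j - 1)) →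
      constraintF m x = ratioF m r) ∧
    (∀ r r' : ℕ → ℝ, (∀ j, 1 ≤ j → j ≤ m - 1 → 1 < r j) →
      (∀ j, 1 ≤ j → j ≤ m - 1 → 1 < r' j) →
      ∀ j₀, 1 ≤ j₀ → j₀ ≤ m - 1 →
      (∀ j, 1 ≤ j → j ≤ m - 1 → j ≠ j₀ → r' j = r j) →
      r j₀ < r' j₀ →
      ratioF m r' < ratioF m r) :=
  stmt1_general m
end

section
/- Let m ≥ 2, γ > 1, and let z_j = cos((m−j)π/m), j = 1,...,m−1, be the zeros of the Chebyshev polynomial of the second kind U_{m−1}. Let β > 0 be the unique positive solution of cosh((2m−1)β)/cosh(β) = γ, and set K = 1/(2 sinh²β) and x_j = 1 + K(1 + z_j), x_0 = 1. Then f(x) := ∑_{j=0}^{m−1} ∏_{i≠j} x_i/|x_i − x_j| = γ. -/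
/-!
Put `w j = cos (j π / m)`, so that `z j = -w j`, and `y = cosh 2β`. Since `2 sinh² β = y - 1`,
`x j = (y - w j) / (y - 1)`, hence `x i / |x i - x j| = (y - w i) / |w j - w i|`.
The `w j` (`j < m`) are the points where the Chebyshev polynomial of the third kind
`V_{m-1} = U_{m-1} - U_{m-2}` takes the values `(-1) ^ j`, and `(-1) ^ j` is also the sign of
`∏_{i ≠ j} (w j - w i)`. Lagrange interpolation at the `w j` therefore gives
`V_{m-1}(y) = ∑_j ∏_{i ≠ j} (y - w i) / |w j - w i|`, so `f(x) = V_{m-1}(cosh 2β)`, and this is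
`cosh ((2m - 1) β) / cosh β` by `V_n(cosh 2t) cosh t = cosh ((2n + 1) t)`.
-/

open Finset Real Polynomial

theorem Lagrange.eval_eq_sum_prod_div_abs {F ι : Type*} [Field F] [LinearOrder F]
    [IsStrictOrderedRing F] [DecidableEq ι] {s : Finset ι} {v : ι → F} (hvs : Set.InjOn v s)
    {p : F[X]} (hp : p.degree < #s)
    (hsign : ∀ j ∈ s, ∏ i ∈ s.erase j, (v j - v i) = p.eval (v j) * ∏ i ∈ s.erase j, |v j - v i|)
    (y : F) : p.eval y = ∑ j ∈ s, ∏ i ∈ s.erase j, (y - v i) / |v j - v i| := by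
  conv_lhs => rw [eq_interpolate hvs hp]
  rw [interpolate_apply, eval_finsetSum]
  refine sum_congr rfl fun j hj => ?_
  have hne : ∏ i ∈ s.erase j, (v j - v i) ≠ 0 := prod_ne_zero_iff.mpr fun i hi =>
    sub_ne_zero.mpr fun h => (ne_of_mem_erase hi) (hvs (mem_of_mem_erase hi) hj h.symm)
  simp only [eval_mul, eval_C, Lagrange.basis, eval_prod, basisDivisor, eval_sub, eval_X,
    prod_mul_distrib, prod_inv_distrib, prod_div_distrib]
  rw [hsign j hj] at hne ⊢
  have hp0 : p.eval (v j) ≠ 0 := left_ne_zero_of_mul hne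
  field_simp

theorem prod_erase_sub_eq_neg_one_pow_mul_prod_abs {R : Type*} [CommRing R] [LinearOrder R]
    [IsStrictOrderedRing R] {v : ℕ → R} {m j : ℕ} (hv : StrictAntiOn v (Set.Iio m))
    (hj : j < m) :
    ∏ i ∈ (range m).erase j, (v j - v i) = (-1) ^ j * ∏ i ∈ (range m).erase j, |v j - v i| := by
  have hfactor : ∀ i ∈ (range m).erase j,
      v j - v i = (if i < j then -1 else 1) * |v j - v i| := by
    intro i hi
    have him : i < m := mem_range.mp (mem_of_mem_erase hi)
    rcases lt_or_gt_of_ne (ne_of_mem_erase hi) with hij | hij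
    · rw [if_pos hij, abs_of_neg (sub_neg.mpr (hv him hj hij))]
      ring
    · rw [if_neg hij.not_gt, abs_of_pos (sub_pos.mpr (hv hj him hij)), one_mul]
  have hbelow : ((range m).erase j).filter (· < j) = range j := by
    ext i
    simp only [mem_filter, mem_erase, mem_range]
    omega
  rw [prod_congr rfl hfactor, prod_mul_distrib, prod_ite, prod_const, prod_const_one, mul_one,
    hbelow, card_range]

theorem strictAntiOn_cos_nat_mul_pi_div (m : ℕ) :
    StrictAntiOn (fun j : ℕ => cos (j * π / m)) (Set.Iic m) := by
  intro a ha b hb hab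
  have hm : (0 : ℝ) < m := by exact_mod_cast (Nat.zero_lt_of_lt hab).trans_le hb
  have hmem : ∀ j : ℕ, j ≤ m → j * π / m ∈ Set.Icc 0 π := fun j hj =>
    ⟨by positivity, by
      rw [div_le_iff₀ hm, mul_comm π]
      exact mul_le_mul_of_nonneg_right (by exact_mod_cast hj) pi_pos.le⟩
  exact strictAntiOn_cos (hmem a ha) (hmem b hb)
    (div_lt_div_of_pos_right (mul_lt_mul_of_pos_right (by exact_mod_cast hab) pi_pos) hm)

namespace Polynomial.Chebyshev

section ThirdKind

variable (R : Type*) [CommRing R]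

noncomputable def V (n : ℤ) : R[X] := U R n - U R (n - 1)

theorem V_add_two (n : ℤ) : V R (n + 2) = 2 * X * V R (n + 1) - V R n := by
  simp only [V, show n + 2 - 1 = n + 1 by ring, add_sub_cancel_right, U_add_two, U_add_one]
  ring

theorem V_sub_one (n : ℤ) : V R (n - 1) = 2 * X * V R n - V R (n + 1) := by
  simp only [V, show n - 1 - 1 = n - 2 by ring, add_sub_cancel_right, U_sub_two]
  linear_combination (norm := ring_nf) U_sub_one R n

theorem natDegree_V_natCast_le [IsDomain R] [NeZero (2 : R)] (n : ℕ) :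
    (V R n).natDegree ≤ n := by
  refine (natDegree_sub_le _ _).trans (max_le (natDegree_U_natCast R n).le ?_)
  rcases n with _ | n
  · simp
  · simp [natDegree_U_natCast]

end ThirdKind

@[simp, norm_cast]
theorem complex_ofReal_eval_V (x : ℝ) (n : ℤ) :
    (((V ℝ n).eval x : ℝ) : ℂ) = (V ℂ n).eval (x : ℂ) := by
  simp [V]

theorem V_complex_cos_two_mul (φ : ℂ) (n : ℤ) :
    (V ℂ n).eval (Complex.cos (2 * φ)) * Complex.cos φ = Complex.cos ((2 * n + 1) * φ) := by
  induction n using Polynomial.Chebyshev.induct with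
  | zero => simp [V]
  | one =>
    rw [show (2 * ((1 : ℤ) : ℂ) + 1) * φ = 3 * φ by push_cast; ring, Complex.cos_three_mul]
    simp [V, Complex.cos_two_mul]
    ring
  | add_two n ih1 ih2 =>
    simp only [V_add_two, eval_sub, eval_mul, eval_X, eval_ofNat, sub_mul, mul_assoc, ih1, ih2,
      sub_eq_iff_eq_add, Complex.cos_add_cos]
    push_cast
    ring_nf
  | neg_add_one n ih1 ih2 =>
    simp only [V_sub_one, eval_sub, eval_mul, eval_X, eval_ofNat, sub_mul, mul_assoc, ih1, ih2,
      sub_eq_iff_eq_add', Complex.cos_add_cos]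
    push_cast
    ring_nf

theorem V_real_cos_two_mul (φ : ℝ) (n : ℤ) :
    (V ℝ n).eval (cos (2 * φ)) * cos φ = cos ((2 * n + 1) * φ) :=
  mod_cast V_complex_cos_two_mul φ n

theorem V_real_cosh_two_mul (t : ℝ) (n : ℤ) :
    (V ℝ n).eval (cosh (2 * t)) * cosh t = cosh ((2 * n + 1) * t) := by
  have h := V_complex_cos_two_mul (t * Complex.I) n
  rw [← mul_assoc, ← mul_assoc, Complex.cos_mul_I, Complex.cos_mul_I, Complex.cos_mul_I] at h
  exact_mod_cast h

theorem V_real_eval_cos_nat_mul_pi_div (n k : ℕ) (hk : k ≤ n) :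
    (V ℝ n).eval (cos (k * π / (n + 1))) = (-1) ^ k := by
  set φ := k * π / (2 * (n + 1)) with hφ
  have hcos : 0 < cos φ := by
    have hk' : (k : ℝ) < n + 1 := by exact_mod_cast Nat.lt_succ_of_le hk
    apply cos_pos_of_mem_Ioo
    constructor
    · have : 0 ≤ φ := by positivity
      linarith [pi_pos]
    · rw [hφ, div_lt_iff₀ (by positivity)]
      nlinarith [pi_pos]
  have h := V_real_cos_two_mul φ n
  rw [show 2 * φ = k * π / (n + 1) by rw [hφ]; field_simp,
    show (2 * ((n : ℤ) : ℝ) + 1) * φ = k * π - φ by rw [hφ]; push_cast; field_simp; ring,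
    cos_nat_mul_pi_sub] at h
  exact mul_right_cancel₀ hcos.ne' h

theorem V_real_eval_eq_sum_prod_div_abs (n : ℕ) (y : ℝ) :
    (V ℝ n).eval y = ∑ j ∈ range (n + 1), ∏ i ∈ (range (n + 1)).erase j,
      (y - cos (i * π / (n + 1))) / |cos (j * π / (n + 1)) - cos (i * π / (n + 1))| := by
  have hw : StrictAntiOn (fun j : ℕ => cos (j * π / (n + 1))) (Set.Iio (n + 1)) := by
    simpa using (strictAntiOn_cos_nat_mul_pi_div (n + 1)).mono Set.Iio_subset_Iic_self
  refine Lagrange.eval_eq_sum_prod_div_abs (hw.injOn.mono (by rw [coe_range])) ?_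
    (fun j hj => ?_) y
  · rw [card_range]
    exact degree_le_natDegree.trans_lt
      (WithBot.coe_lt_coe.mpr (Nat.lt_succ_of_le (natDegree_V_natCast_le ℝ n)))
  · rw [prod_erase_sub_eq_neg_one_pow_mul_prod_abs hw (mem_range.mp hj),
      V_real_eval_cos_nat_mul_pi_div n j (Nat.lt_succ_iff.mp (mem_range.mp hj))]

end Polynomial.Chebyshev

open Polynomial.Chebyshev

theorem stmt5_general (m : ℕ) (hm : 2 ≤ m) (γ : ℝ)
    (β : ℝ) (hβ : 0 < β)
    (hβγ : Real.cosh ((2 * m - 1) * β) / Real.cosh β = γ)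
    (K : ℝ) (hK : K = 1 / (2 * Real.sinh β ^ 2))
    (z : ℕ → ℝ) (hz : ∀ j, z j = Real.cos (((m : ℝ) - j) * π / m))
    (x : ℕ → ℝ) (hx : ∀ j, x j = 1 + K * (1 + z j)) :
    ∑ j ∈ range m, ∏ i ∈ (range m).erase j, x i / |x i - x j| = γ := by
  obtain ⟨n, rfl⟩ : ∃ n, m = n + 1 := ⟨m - 1, by omega⟩
  set w : ℕ → ℝ := fun j => cos (j * π / (n + 1))
  have hcosh : cosh (2 * β) = 2 * sinh β ^ 2 + 1 := by
    rw [cosh_two_mul, cosh_sq]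
    ring
  have hy : 0 < cosh (2 * β) - 1 := by
    rw [hcosh, add_sub_cancel_right]
    exact mul_pos two_pos (pow_pos (sinh_pos_iff.mpr hβ) 2)
  have hx_eq : ∀ j, x j = (cosh (2 * β) - w j) / (cosh (2 * β) - 1) := by
    intro j
    rw [hx, hz, hK, show ((n + 1 : ℕ) - (j : ℝ)) * π / (n + 1 : ℕ) = π - j * π / (n + 1) by
      push_cast; field_simp, cos_pi_sub, hcosh]
    simp only [w]
    field_simp
    ring
  calc ∑ j ∈ range (n + 1), ∏ i ∈ (range (n + 1)).erase j, x i / |x i - x j|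
      = ∑ j ∈ range (n + 1), ∏ i ∈ (range (n + 1)).erase j,
          (cosh (2 * β) - w i) / |w j - w i| := by
        refine sum_congr rfl fun j _ => prod_congr rfl fun i _ => ?_
        rw [hx_eq, hx_eq, div_sub_div_same, sub_sub_sub_cancel_left, abs_div, abs_of_pos hy,
          div_div_div_cancel_right₀ hy.ne']
    _ = (V ℝ n).eval (cosh (2 * β)) := (V_real_eval_eq_sum_prod_div_abs n _).symm
    _ = γ := by
      rw [← hβγ, eq_div_iff (cosh_pos β).ne', V_real_cosh_two_mul]
      push_cast
      ring_nf

/-- with `z j = cos((m-j)π/m)` the zeros of `U_{m-1}`, `β > 0` the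
solution of `cosh((2m-1)β)/cosh β = γ`, `K = 1/(2 sinh² β)` and
`x j = 1 + K (1 + z j)` (so `x 0 = 1`), one has
`f(x) = ∑_{j<m} ∏_{i≠j} x i / |x i - x j| = γ`. -/
theorem stmt5 (m : ℕ) (hm : 2 ≤ m) (γ : ℝ) (hγ : 1 < γ)
    (β : ℝ) (hβ : 0 < β)
    (hβγ : Real.cosh ((2 * m - 1) * β) / Real.cosh β = γ)
    (K : ℝ) (hK : K = 1 / (2 * Real.sinh β ^ 2))
    (z : ℕ → ℝ) (hz : ∀ j, z j = Real.cos (((m : ℝ) - j) * π / m))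
    (x : ℕ → ℝ) (hx : ∀ j, x j = 1 + K * (1 + z j)) :
    ∑ j ∈ range m, ∏ i ∈ (range m).erase j, x i / |x i - x j| = γ :=
  stmt5_general m hm γ β hβ hβγ K hK z hz x hx
end

section
/- Let m ≥ 2 and let y_0, y_1, ..., y_{m−1} be pairwise distinct complex numbers, b_k = ∏_{i≠k} 1/(y_i − y_k), and p a polynomial with p'(s) = ∏_{j=1}^{m−1}(s − y_j). Then for every k = 1,...,m−1: ∑_{j≠k} [b_k p(y_k) + b_j p(y_j)]/(y_j − y_k) = (−1)^{m−1}/m. -/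
/-!
With `c j = ∏_{i ≠ j} (y j - y i)⁻¹` (the nodal weights, so `b = (-1)^(m-1) c`), `∑ j, c j q(y j)`
is the coefficient of `X^(m-1)` of any `q` of degree `< m`. Applied to the quotient
`(q - q(y k)) / (X - y k)` this computes the divided difference of `q` on the nodes with `y k`
doubled, whose term at the doubled node is `c k q'(y k)`. For `q = p` that term vanishes because
`p'(y k) = 0`, and the leading coefficient of `p` is `1/m`; for `q = ∏_{i ≠ k} (X - y i)` the
identity evaluates `∑_{j ≠ k} c j / (y j - y k)`, which is exactly what absorbs the `b k p(y k)`
terms.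
-/

open Finset Polynomial

namespace Lagrange

variable {F ι : Type*} [Field F] [DecidableEq ι] {s : Finset ι} {v : ι → F}

theorem sum_nodalWeight_mul_eval_eq_coeff (hvs : Set.InjOn v s) {q : F[X]}
    (hq : q.degree < #s) :
    ∑ i ∈ s, nodalWeight s v i * q.eval (v i) = q.coeff (#s - 1) := by
  rw [coeff_eq_sum hvs hq]
  refine sum_congr rfl fun i _ => ?_
  rw [nodalWeight, prod_inv_distrib, div_eq_mul_inv, mul_comm]

theorem eval_derivative_nodal_of_forall_ne {t : Finset ι} {x : F} (hx : ∀ i ∈ t, x ≠ v i) :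
    (derivative (nodal t v)).eval x = (nodal t v).eval x * ∑ i ∈ t, (x - v i)⁻¹ := by
  rw [derivative_nodal, eval_finsetSum, mul_sum]
  refine sum_congr rfl fun i hi => ?_
  rw [eval_nodal, eval_nodal, ← mul_prod_erase _ _ hi, eq_comm, mul_comm,
    inv_mul_cancel_left₀ (sub_ne_zero.mpr (hx i hi))]

theorem sum_nodalWeight_mul_slope_add_eq_coeff (hvs : Set.InjOn v s) {k : ι} (hk : k ∈ s)
    {q : F[X]} (hq : q.natDegree ≤ #s) :
    ∑ j ∈ s.erase k, nodalWeight s v j * ((q.eval (v j) - q.eval (v k)) / (v j - v k)) +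
        nodalWeight s v k * (derivative q).eval (v k) = q.coeff #s := by
  set r := q /ₘ (X - C (v k))
  have hs : 0 < #s := card_pos.mpr ⟨k, hk⟩
  have hr_natDegree : r.natDegree < #s := by
    rw [natDegree_divByMonic _ (monic_X_sub_C _), natDegree_X_sub_C]; omega
  have hr_coeff : r.coeff (#s - 1) = q.coeff #s := by
    rw [coeff_divByMonic_X_sub_C_rec, Nat.sub_add_cancel hs,
      coeff_eq_zero_of_natDegree_lt hr_natDegree, mul_zero, add_zero]
  have hr_node : ∀ j ∈ s.erase k, r.eval (v j) = (q.eval (v j) - q.eval (v k)) / (v j - v k) := by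
    intro j hj
    have hjk : v j - v k ≠ 0 :=
      sub_ne_zero.mpr (hvs.ne (mem_of_mem_erase hj) hk (ne_of_mem_erase hj))
    have h := congrArg (eval (v j)) (X_sub_C_mul_divByMonic_eq_sub_modByMonic q (v k))
    rw [modByMonic_X_sub_C_eq_C_eval] at h
    simp only [eval_mul, eval_sub, eval_X, eval_C] at h
    rw [eq_div_iff hjk, mul_comm, h]
  have hr_self : r.eval (v k) = (derivative q).eval (v k) := by
    simpa using congrArg (eval (v k))
      (divByMonic_add_X_sub_C_mul_derivative_divByMonic_eq_derivative q (v k))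
  rw [← hr_coeff, ← sum_nodalWeight_mul_eval_eq_coeff hvs
    ((degree_le_natDegree).trans_lt (WithBot.coe_lt_coe.mpr hr_natDegree)),
    ← sum_erase_add _ _ hk, hr_self]
  congr 1
  exact sum_congr rfl fun j hj => by rw [hr_node j hj]

theorem sum_nodalWeight_div_sub_node (hvs : Set.InjOn v s) {k : ι} (hk : k ∈ s) :
    ∑ j ∈ s.erase k, nodalWeight s v j / (v j - v k) =
      nodalWeight s v k * ∑ j ∈ s.erase k, (v k - v j)⁻¹ := by
  set u := nodal (s.erase k) v
  have hne : ∀ j ∈ s.erase k, v k ≠ v j := fun j hj =>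
    hvs.ne hk (mem_of_mem_erase hj) (ne_of_mem_erase hj).symm
  have hu_natDegree : u.natDegree < #s := by
    rw [natDegree_nodal, card_erase_of_mem hk]
    exact Nat.sub_lt (card_pos.mpr ⟨k, hk⟩) one_pos
  have hu_self : nodalWeight s v k * u.eval (v k) = 1 := by
    rw [nodalWeight_eq_eval_nodal_erase_inv]
    refine inv_mul_cancel₀ ?_
    rw [eval_nodal]
    exact prod_ne_zero_iff.mpr fun j hj => sub_ne_zero.mpr (hne j hj)
  have hu_node : ∑ j ∈ s.erase k, nodalWeight s v j * ((u.eval (v j) - u.eval (v k)) / (v j - v k))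
      = -(u.eval (v k) * ∑ j ∈ s.erase k, nodalWeight s v j / (v j - v k)) := by
    rw [mul_sum, ← sum_neg_distrib]
    exact sum_congr rfl fun j hj => by rw [eval_nodal_at_node hj]; ring
  have h := sum_nodalWeight_mul_slope_add_eq_coeff hvs hk hu_natDegree.le
  rw [hu_node, coeff_eq_zero_of_natDegree_lt hu_natDegree,
    eval_derivative_nodal_of_forall_ne hne] at h
  linear_combination (-nodalWeight s v k) * h +
    (nodalWeight s v k * ∑ j ∈ s.erase k, (v k - v j)⁻¹ -
      ∑ j ∈ s.erase k, nodalWeight s v j / (v j - v k)) * hu_self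

theorem sum_nodalWeight_mul_eval_add_div_sub_node (hvs : Set.InjOn v s) {k : ι} (hk : k ∈ s)
    {p : F[X]} (hp : p.natDegree ≤ #s) (hpk : (derivative p).eval (v k) = 0) :
    ∑ j ∈ s.erase k,
        (nodalWeight s v k * p.eval (v k) + nodalWeight s v j * p.eval (v j)) / (v j - v k) =
      p.coeff #s := by
  have hslope := sum_nodalWeight_mul_slope_add_eq_coeff hvs hk hp
  rw [hpk, mul_zero, add_zero] at hslope
  have hsplit : ∀ j ∈ s.erase k,
      (nodalWeight s v k * p.eval (v k) + nodalWeight s v j * p.eval (v j)) / (v j - v k) =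
        nodalWeight s v j * ((p.eval (v j) - p.eval (v k)) / (v j - v k)) +
          p.eval (v k) * (nodalWeight s v j / (v j - v k) - nodalWeight s v k * (v k - v j)⁻¹) := by
    intro j hj
    have hjk : v j - v k ≠ 0 :=
      sub_ne_zero.mpr (hvs.ne (mem_of_mem_erase hj) hk (ne_of_mem_erase hj))
    have hkj : v k - v j ≠ 0 := by rwa [← neg_sub, neg_ne_zero]
    field_simp
    ring
  rw [sum_congr rfl hsplit, sum_add_distrib, hslope, ← mul_sum, sum_sub_distrib, ← mul_sum,
    sum_nodalWeight_div_sub_node hvs hk, sub_self, mul_zero, add_zero]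

end Lagrange

theorem stmt9_general (m : ℕ) (y : ℕ → ℂ)
    (hy : ∀ i < m, ∀ j < m, i ≠ j → y i ≠ y j)
    (b : ℕ → ℂ) (hb : ∀ k, b k = ∏ i ∈ (range m).erase k, 1 / (y i - y k))
    (p : Polynomial ℂ)
    (hp : derivative p = ∏ j ∈ Ico 1 m, (X - C (y j))) :
    ∀ k, 1 ≤ k → k ≤ m - 1 →
      ∑ j ∈ (range m).erase k,
          (b k * p.eval (y k) + b j * p.eval (y j)) / (y j - y k)
        = (-1) ^ (m - 1) / m := by
  intro k hk1 hkm
  have hvs : Set.InjOn y (range m) := fun i hi j hj hij =>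
    by_contra fun hne => hy i (mem_range.mp hi) j (mem_range.mp hj) hne hij
  have hb_weight : ∀ j ∈ range m, b j = (-1) ^ (m - 1) * Lagrange.nodalWeight (range m) y j := by
    intro j hj
    have hsign : (-1 : ℂ) ^ (m - 1) = ∏ _i ∈ (range m).erase j, (-1) := by
      rw [prod_const, card_erase_of_mem hj, card_range]
    rw [hb, Lagrange.nodalWeight, hsign, ← prod_mul_distrib]
    exact prod_congr rfl fun i _ => by rw [one_div, ← neg_sub, inv_neg, neg_one_mul]
  rw [← Lagrange.nodal_eq] at hp
  have hp_natDegree : p.natDegree = m := by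
    have := natDegree_derivative p
    rw [hp, Lagrange.natDegree_nodal, Nat.card_Ico] at this
    omega
  have hp_coeff : p.coeff m * m = 1 := by
    have h := leadingCoeff_derivative p
    rwa [hp, Lagrange.nodal_monic.leadingCoeff, leadingCoeff, hp_natDegree, eq_comm] at h
  have hpk : (derivative p).eval (y k) = 0 := by
    rw [hp]; exact Lagrange.eval_nodal_at_node (mem_Ico.mpr ⟨hk1, by omega⟩)
  have hk : k ∈ range m := mem_range.mpr (by omega)
  calc ∑ j ∈ (range m).erase k, (b k * p.eval (y k) + b j * p.eval (y j)) / (y j - y k)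
      = (-1) ^ (m - 1) * ∑ j ∈ (range m).erase k,
          (Lagrange.nodalWeight (range m) y k * p.eval (y k) +
            Lagrange.nodalWeight (range m) y j * p.eval (y j)) / (y j - y k) := by
        rw [mul_sum]
        refine sum_congr rfl fun j hj => ?_
        rw [hb_weight k hk, hb_weight j (mem_of_mem_erase hj)]
        ring
    _ = (-1) ^ (m - 1) * p.coeff m := by
        rw [Lagrange.sum_nodalWeight_mul_eval_add_div_sub_node hvs hk (by simp [hp_natDegree]) hpk,
          card_range]
    _ = (-1) ^ (m - 1) / m := by rw [eq_div_of_mul_eq (by norm_cast; omega) hp_coeff]; ring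

/-- for pairwise distinct `y 0, ..., y (m-1)` in ℂ,
`b k = ∏_{i≠k} 1/(y i - y k)`, and `p` any antiderivative of
`∏_{j=1}^{m-1} (s - y j)`, one has for each `k = 1, ..., m-1`:
`∑_{j≠k} (b k p(y k) + b j p(y j))/(y j - y k) = (-1)^{m-1}/m`. -/
theorem stmt9 (m : ℕ) (hm : 2 ≤ m) (y : ℕ → ℂ)
    (hy : ∀ i < m, ∀ j < m, i ≠ j → y i ≠ y j)
    (b : ℕ → ℂ) (hb : ∀ k, b k = ∏ i ∈ (range m).erase k, 1 / (y i - y k))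
    (p : Polynomial ℂ)
    (hp : derivative p = ∏ j ∈ Ico 1 m, (X - C (y j))) :
    ∀ k, 1 ≤ k → k ≤ m - 1 →
      ∑ j ∈ (range m).erase k,
          (b k * p.eval (y k) + b j * p.eval (y j)) / (y j - y k)
        = (-1) ^ (m - 1) / m :=
  stmt9_general m y hy b hb p hp
end

section
/- Let m ≥ 2 and y_0, ..., y_{m−1} pairwise distinct reals. Define the m×m matrix B̃ with off-diagonal entries B̃_{jk} = 1/(y_j − y_k) (j ≠ k) and diagonal entries B̃_{jj} = ∑_{l≠j} 1/(y_j − y_l). Then B̃ is similar to the nilpotent single Jordan block J of size m (with ones on the superdiagonal); in particular rank B̃ = m−1 and ker B̃ is one-dimensional. -/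
open Finset Matrix Polynomial Nat

/-!
Write `w_j = ∏_{l ≠ j} (y_j - y_l)⁻¹` for the barycentric weights of the nodes. Differentiating the
Lagrange interpolation formula `p = ∑_k p(y_k) L_k` at a node gives `w_j L_k'(y_j) = B̃_{jk} w_k`,
so `B̃` is the matrix of `p ↦ p'` on polynomials of degree `< m` in the coordinates
`p ↦ (w_j p(y_j))_j`. Differentiation maps `Xⁿ⁺¹/(n+1)!` to `Xⁿ/n!` and kills `1`, so the matrix
whose columns are the coordinates of `Xⁿ/n!` (a rescaled Vandermonde matrix, hence invertible)
conjugates `B̃` to the nilpotent Jordan block. Rank and nullity are then those of the block.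
-/

namespace Lagrange

variable {F ι : Type*} [Field F] {s t : Finset ι} {v : ι → F} {i k : ι}

theorem eval_nodal_ne_zero_of_notMem (hvs : Set.InjOn v s) (hi : i ∈ s) (hts : t ⊆ s)
    (hit : i ∉ t) : (nodal t v).eval (v i) ≠ 0 :=
  eval_nodal_not_at_node fun _ hj h => hit (hvs hi (hts hj) h ▸ hj)

variable [DecidableEq ι]

theorem basis_eq_C_nodalWeight_mul_nodal_erase (hi : i ∈ s) :
    Lagrange.basis s v i = C (nodalWeight s v i) * nodal (s.erase i) v := by
  rw [basis_eq_prod_sub_inv_mul_nodal_div hi, nodal_erase_eq_nodal_div hi]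

theorem eval_derivative_basis_self (hvs : Set.InjOn v s) (hi : i ∈ s) :
    (derivative (Lagrange.basis s v i)).eval (v i) = ∑ l ∈ s.erase i, (v i - v l)⁻¹ := by
  rw [basis_eq_C_nodalWeight_mul_nodal_erase hi, derivative_C_mul, derivative_nodal, eval_mul,
    eval_C, eval_finsetSum, mul_sum]
  refine sum_congr rfl fun l hl => ?_
  have hN : (nodal ((s.erase i).erase l) v).eval (v i) ≠ 0 :=
    eval_nodal_ne_zero_of_notMem hvs hi ((erase_subset _ _).trans (erase_subset _ _))
      fun h => notMem_erase i s (mem_of_mem_erase h)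
  rw [nodalWeight_eq_eval_nodal_erase_inv, nodal_eq_mul_nodal_erase hl, eval_mul, eval_sub, eval_X,
    eval_C, mul_inv, mul_right_comm, mul_inv_cancel_right₀ hN]

theorem nodalWeight_mul_eval_derivative_basis (hvs : Set.InjOn v s) (hi : i ∈ s) (hk : k ∈ s)
    (hik : i ≠ k) :
    nodalWeight s v k * (derivative (Lagrange.basis s v i)).eval (v k) =
      (v k - v i)⁻¹ * nodalWeight s v i := by
  have hki : k ∈ s.erase i := mem_erase.mpr ⟨hik.symm, hk⟩
  have hN : (nodal ((s.erase i).erase k) v).eval (v k) ≠ 0 :=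
    eval_nodal_ne_zero_of_notMem hvs hk ((erase_subset _ _).trans (erase_subset _ _))
      (notMem_erase k _)
  rw [basis_eq_C_nodalWeight_mul_nodal_erase hi, derivative_C_mul, eval_mul, eval_C,
    eval_nodal_derivative_eval_node_eq hki, nodalWeight_eq_eval_nodal_erase_inv (i := k),
    nodal_eq_mul_nodal_erase (mem_erase.mpr ⟨hik, hi⟩), erase_right_comm, eval_mul, eval_sub,
    eval_X, eval_C, mul_inv, mul_comm (nodalWeight s v i), ← mul_assoc, mul_assoc _ _⁻¹,
    inv_mul_cancel₀ hN, mul_one]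

theorem eval_derivative_eq_sum (hvs : Set.InjOn v s) {p : F[X]} (hp : p.degree < #s) (x : F) :
    (derivative p).eval x = ∑ i ∈ s, p.eval (v i) * (derivative (Lagrange.basis s v i)).eval x := by
  conv_lhs => rw [eq_interpolate hvs hp, interpolate_apply]
  simp only [derivative_sum, derivative_C_mul, eval_finsetSum, eval_mul, eval_C]

end Lagrange

section Differentiation

variable {F ι : Type*} [Field F] [Fintype ι] [DecidableEq ι]

def differentiationMatrix (v : ι → F) : Matrix ι ι F :=
  of fun j k => if j = k then ∑ l ∈ univ.erase j, (v j - v l)⁻¹ else (v j - v k)⁻¹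

def weightedEval (v : ι → F) (p : F[X]) : ι → F :=
  fun j => Lagrange.nodalWeight univ v j * p.eval (v j)

theorem differentiationMatrix_mulVec_weightedEval {v : ι → F} (hv : Function.Injective v)
    {p : F[X]} (hp : p.degree < Fintype.card ι) :
    differentiationMatrix v *ᵥ weightedEval v p = weightedEval v (derivative p) := by
  have hvs : Set.InjOn v (univ : Finset ι) := hv.injOn
  funext j
  rw [weightedEval, Lagrange.eval_derivative_eq_sum hvs (by simpa using hp), mul_sum, mulVec,
    dotProduct]
  refine sum_congr rfl fun k _ => ?_
  rw [differentiationMatrix, of_apply, weightedEval]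
  split_ifs with hjk
  · subst hjk
    rw [Lagrange.eval_derivative_basis_self hvs (mem_univ j)]
    ring
  · rw [mul_left_comm _ (p.eval (v k)),
      Lagrange.nodalWeight_mul_eval_derivative_basis hvs (mem_univ k) (mem_univ j) (Ne.symm hjk)]
    ring

end Differentiation

def nilpotentJordanBlock (R : Type*) [Zero R] [One R] (m : ℕ) : Matrix (Fin m) (Fin m) R :=
  of fun i j => if (i : ℕ) + 1 = j then 1 else 0

section JordanBlock

variable {R : Type*} [NonAssocSemiring R] {m : ℕ}

theorem mul_nilpotentJordanBlock_apply {ι : Type*} (A : Matrix ι (Fin m) R) (j : ι) (n : Fin m) :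
    (A * nilpotentJordanBlock R m) j n = if h : (n : ℕ) = 0 then 0 else A j ⟨n - 1, by omega⟩ := by
  simp only [mul_apply, nilpotentJordanBlock, of_apply, mul_ite, mul_one, mul_zero]
  split_ifs with hn
  · exact sum_eq_zero fun k _ => if_neg (by omega)
  · rw [Fintype.sum_eq_single ⟨n - 1, by omega⟩ fun k hk => if_neg fun h => hk (Fin.ext (by
      simp only; omega)), if_pos (by simp only; omega)]

theorem nilpotentJordanBlock_mulVec_apply (x : Fin m → R) (i : Fin m) :
    (nilpotentJordanBlock R m *ᵥ x) i = if h : (i : ℕ) + 1 < m then x ⟨i + 1, h⟩ else 0 := by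
  simp only [mulVec, dotProduct, nilpotentJordanBlock, of_apply, ite_mul, one_mul, zero_mul]
  split_ifs with hi
  · rw [Fintype.sum_eq_single ⟨i + 1, hi⟩ fun k hk => if_neg fun h => hk (Fin.ext (by
      simp only; omega)), if_pos rfl]
  · exact sum_eq_zero fun k _ => if_neg (by omega)

theorem mul_jordanChain_eq_mul_nilpotentJordanBlock {ι : Type*} [Fintype ι] {A : Matrix ι ι R}
    {c : ℕ → ι → R} (h0 : A *ᵥ c 0 = 0) (hsucc : ∀ n, n + 1 < m → A *ᵥ c (n + 1) = c n) :
    A * of (fun j (n : Fin m) => c n j) =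
      of (fun j (n : Fin m) => c n j) * nilpotentJordanBlock R m := by
  ext j ⟨_ | k, hk⟩ <;> rw [mul_nilpotentJordanBlock_apply]
  · exact congrFun h0 j
  · exact congrFun (hsucc k hk) j

end JordanBlock

section JordanBlockKernel

variable {K : Type*} [Field K] {m : ℕ} [NeZero m]

theorem ker_mulVecLin_nilpotentJordanBlock :
    LinearMap.ker (nilpotentJordanBlock K m).mulVecLin = K ∙ Pi.single 0 1 := by
  ext x
  rw [LinearMap.mem_ker, mulVecLin_apply, Submodule.mem_span_singleton]
  constructor
  · intro hx
    refine ⟨x 0, funext fun k => ?_⟩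
    by_cases hk : k = 0
    · simp [hk]
    · have hxk : x k = 0 := by
        have := congrFun hx ⟨k - 1, by omega⟩
        rw [nilpotentJordanBlock_mulVec_apply, dif_pos (by simp only; omega)] at this
        simpa [Nat.sub_add_cancel (Nat.pos_of_ne_zero (Fin.val_ne_zero_iff.mpr hk))] using this
      simp [hk, hxk]
  · rintro ⟨a, rfl⟩
    funext i
    rw [nilpotentJordanBlock_mulVec_apply]
    split_ifs
    · rw [Pi.smul_apply, Pi.single_eq_of_ne (Fin.ne_of_val_ne (by
        rw [Fin.val_zero]; exact Nat.succ_ne_zero _)), smul_zero, Pi.zero_apply]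
    · rfl

theorem finrank_ker_mulVecLin_nilpotentJordanBlock :
    Module.finrank K (LinearMap.ker (nilpotentJordanBlock K m).mulVecLin) = 1 := by
  rw [ker_mulVecLin_nilpotentJordanBlock, finrank_span_singleton]
  exact Pi.single_ne_zero_iff.mpr one_ne_zero

end JordanBlockKernel

theorem Matrix.rank_add_finrank_ker_mulVecLin {K m n : Type*} [Field K] [Fintype n]
    (A : Matrix m n K) :
    A.rank + Module.finrank K (LinearMap.ker A.mulVecLin) = Fintype.card n := by
  rw [rank, LinearMap.finrank_range_add_finrank_ker, Module.finrank_fintype_fun_eq_card]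


section JordanChain

variable {F : Type*} [Field F] [CharZero F] {m : ℕ}

theorem derivative_C_inv_factorial_mul_X_pow_succ (n : ℕ) :
    derivative (C ((n + 1)! : F)⁻¹ * X ^ (n + 1)) = C (n ! : F)⁻¹ * X ^ n := by
  rw [derivative_C_mul_X_pow, Nat.add_sub_cancel, factorial_succ, Nat.cast_mul, mul_inv,
    mul_right_comm, inv_mul_cancel₀ (Nat.cast_ne_zero.mpr n.succ_ne_zero), one_mul]

/-- The paper's similarity uses `(y_j - y_{m-1})ⁿ / n!` and `b_j = (-1)^(m-1) w_j` instead; the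
coordinates of the divided powers `(X - a)ⁿ / n!` work for every `a`. -/
noncomputable def jordanChainMatrix (y : Fin m → F) : Matrix (Fin m) (Fin m) F :=
  of fun j n => weightedEval y (C ((n : ℕ)! : F)⁻¹ * X ^ (n : ℕ)) j

theorem jordanChainMatrix_eq (y : Fin m → F) :
    jordanChainMatrix y = diagonal (Lagrange.nodalWeight univ y) * vandermonde y *
      diagonal fun n : Fin m => ((n : ℕ)! : F)⁻¹ := by
  ext j n
  simp only [jordanChainMatrix, weightedEval, of_apply, diagonal_mul, mul_diagonal,
    vandermonde_apply, eval_mul, eval_C, eval_pow, eval_X]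
  ring

theorem isUnit_det_jordanChainMatrix {y : Fin m → F} (hy : Function.Injective y) :
    IsUnit (jordanChainMatrix y).det := by
  rw [jordanChainMatrix_eq, det_mul, det_mul, det_diagonal, det_diagonal, isUnit_iff_ne_zero]
  refine mul_ne_zero (mul_ne_zero ?_ (det_vandermonde_ne_zero_iff.mpr hy)) ?_
  · exact prod_ne_zero_iff.mpr fun j _ => Lagrange.nodalWeight_ne_zero hy.injOn (mem_univ j)
  · exact prod_ne_zero_iff.mpr fun n _ => inv_ne_zero (Nat.cast_ne_zero.mpr (factorial_ne_zero _))

theorem differentiationMatrix_mul_jordanChainMatrix [NeZero m] {y : Fin m → F}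
    (hy : Function.Injective y) :
    differentiationMatrix y * jordanChainMatrix y =
      jordanChainMatrix y * nilpotentJordanBlock F m := by
  have hdeg : ∀ n < m, (C (n ! : F)⁻¹ * X ^ n).degree < (Fintype.card (Fin m) : WithBot ℕ) :=
    fun n hn => (degree_C_mul_X_pow_le _ _).trans_lt (by simpa using WithBot.coe_lt_coe.mpr hn)
  refine mul_jordanChain_eq_mul_nilpotentJordanBlock
    (c := fun n => weightedEval y (C (n ! : F)⁻¹ * X ^ n)) ?_ fun n hn => ?_
  · rw [differentiationMatrix_mulVec_weightedEval hy (hdeg 0 (NeZero.pos m))]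
    ext j
    simp [weightedEval]
  · rw [differentiationMatrix_mulVec_weightedEval hy (hdeg _ hn),
      derivative_C_inv_factorial_mul_X_pow_succ]

end JordanChain

/-- the matrix `B̃` with off-diagonal entries `1/(y j - y k)` and
diagonal entries `∑_{l≠j} 1/(y j - y l)` is similar to the nilpotent single
Jordan block of size `m`; in particular its rank is `m - 1` and its kernel is
one-dimensional. -/
theorem stmt11 (m : ℕ) (hm : 2 ≤ m) (y : Fin m → ℝ) (hy : Function.Injective y)
    (B : Matrix (Fin m) (Fin m) ℝ)
    (hB : ∀ j k, B j k = if j = k then ∑ l ∈ univ.erase j, 1 / (y j - y l)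
      else 1 / (y j - y k))
    (J : Matrix (Fin m) (Fin m) ℝ)
    (hJ : ∀ i j : Fin m, J i j = if (i : ℕ) + 1 = (j : ℕ) then 1 else 0) :
    (∃ P : Matrix (Fin m) (Fin m) ℝ, IsUnit P.det ∧ B = P * J * P⁻¹) ∧
    B.rank = m - 1 ∧
    Module.finrank ℝ (LinearMap.ker B.mulVecLin) = 1 := by
  obtain rfl : J = nilpotentJordanBlock ℝ m := Matrix.ext hJ
  obtain rfl : B = differentiationMatrix y := Matrix.ext fun j k => by
    simp only [hB, differentiationMatrix, of_apply, one_div]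
  have : NeZero m := ⟨by omega⟩
  set P := jordanChainMatrix y
  have hP : IsUnit P.det := isUnit_det_jordanChainMatrix hy
  have hsimilar : differentiationMatrix y = P * nilpotentJordanBlock ℝ m * P⁻¹ := by
    rw [← differentiationMatrix_mul_jordanChainMatrix hy, mul_nonsing_inv_cancel_right _ _ hP]
  have hrank : (differentiationMatrix y).rank = (nilpotentJordanBlock ℝ m).rank := by
    rw [hsimilar, rank_mul_eq_left_of_isUnit_det _ _ (isUnit_nonsing_inv_det P hP),
      rank_mul_eq_right_of_isUnit_det _ _ hP]
  have hnullityB := rank_add_finrank_ker_mulVecLin (differentiationMatrix y)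
  have hnullityJ := rank_add_finrank_ker_mulVecLin (nilpotentJordanBlock ℝ m)
  rw [finrank_ker_mulVecLin_nilpotentJordanBlock, Fintype.card_fin] at hnullityJ
  rw [Fintype.card_fin] at hnullityB
  exact ⟨⟨P, hP, hsimilar⟩, by omega, by omega⟩
end

section
/- If p is a real polynomial of degree m ≥ 1 with the equi-oscillation property on [−1,1], then p equals the Chebyshev polynomial T_m of the first kind. -/
/-!
Let `P = ∏_{j ≤ m} (X - ζ_j)`. The polynomial `(X² - 1) p'` vanishes at every `ζ_j` and has
degree `m + 1`, so it is a multiple of `P`; the polynomial `(X² - 1)(p² - 1)` vanishes to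
second order at every `ζ_j` and has degree `2m + 2`, so it is a multiple of `P²`. Comparing
leading coefficients gives the Pell equation `(X² - 1) p'² = m² (p² - 1)`. Differentiating it
and cancelling `2p'` shows that `p` solves Chebyshev's equation
`(1 - X²) y'' - X y' + m² y = 0`, whose polynomial solutions of degree at most `m` are
determined by their coefficient of `X^m`. Since `T_m` is one of them and `p(1) = 1 = T_m(1)`,
`p = T_m`.
-/

open Polynomial

namespace Polynomial

section CommRing

variable {R : Type*} [CommRing R]

theorem X_sub_C_sq_dvd_of_isRoot_of_isRoot_derivative {f : R[X]} {a : R} (h₀ : f.IsRoot a)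
    (h₁ : (derivative f).IsRoot a) : (X - C a) ^ 2 ∣ f := by
  rcases eq_or_ne f 0 with rfl | hf
  · exact dvd_zero _
  exact (le_rootMultiplicity_iff hf).mp
    ((one_lt_rootMultiplicity_iff_isRoot hf).mpr ⟨h₀, h₁⟩)

variable (R) in
noncomputable def chebyshevOperator (n : ℕ) : R[X] →ₗ[R] R[X] :=
  LinearMap.mulLeft R (1 - X ^ 2) ∘ₗ derivative ∘ₗ derivative
    - LinearMap.mulLeft R X ∘ₗ derivative + ((n : R) ^ 2) • LinearMap.id

theorem chebyshevOperator_apply (n : ℕ) (q : R[X]) :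
    chebyshevOperator R n q
      = (1 - X ^ 2) * derivative (derivative q) - X * derivative q + C ((n : R) ^ 2) * q := by
  simp [chebyshevOperator, smul_eq_C_mul]

theorem Chebyshev.chebyshevOperator_T (n : ℕ) : chebyshevOperator R n (Chebyshev.T R n) = 0 := by
  have h := Chebyshev.one_sub_X_sq_mul_derivative_derivative_T_eq_poly_in_T (R := R) n
  rw [Function.iterate_succ, Function.iterate_one, Function.comp_apply] at h
  rw [chebyshevOperator_apply, h]
  simp

theorem coeff_chebyshevOperator (n : ℕ) (q : R[X]) (k : ℕ) :
    (chebyshevOperator R n q).coeff k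
      = (k + 2) * (k + 1) * q.coeff (k + 2) - ((k : R) ^ 2 - (n : R) ^ 2) * q.coeff k := by
  rw [chebyshevOperator_apply, sub_mul, one_mul, coeff_add, coeff_sub, coeff_sub, coeff_C_mul]
  rcases k with _ | _ | k <;>
    simp [coeff_derivative, coeff_X_mul, coeff_X_pow_mul'] <;> ring

end CommRing

section IsDomain

variable {R : Type*} [CommRing R] [IsDomain R] [CharZero R]

theorem eq_zero_of_chebyshevOperator_eq_zero {n : ℕ} {q : R[X]}
    (hq : chebyshevOperator R n q = 0) (hdeg : q.degree < n) : q = 0 := by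
  rw [degree_lt_iff_coeff_zero] at hdeg
  suffices h : ∀ d k, n ≤ k + d → q.coeff k = 0 from ext fun k => h n k le_add_self
  intro d
  induction d with
  | zero => exact hdeg
  | succ d ih =>
    intro k hk
    rcases le_or_gt n k with hnk | hkn
    · exact hdeg k hnk
    have hrec := coeff_chebyshevOperator n q k
    rw [hq, coeff_zero, ih (k + 2) (by omega), mul_zero, zero_sub, eq_comm, neg_eq_zero] at hrec
    refine (mul_eq_zero.mp hrec).resolve_left (sub_ne_zero.mpr ?_)
    exact_mod_cast (Nat.pow_left_strictMono two_ne_zero hkn).ne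

theorem eq_T_of_chebyshevOperator_eq_zero {n : ℕ} {p : R[X]} (hp : chebyshevOperator R n p = 0)
    (hdeg : p.natDegree ≤ n) (h₁ : p.eval 1 = 1) : p = Chebyshev.T R n := by
  set c := (Chebyshev.T R n).leadingCoeff
  have hc : c ≠ 0 := by simp [c]
  have hTdeg : (Chebyshev.T R n).natDegree = n := by simp
  have hr : c • p - p.coeff n • Chebyshev.T R n = 0 := by
    refine eq_zero_of_chebyshevOperator_eq_zero (n := n) ?_ ?_
    · simp [hp, Chebyshev.chebyshevOperator_T]
    · rw [degree_lt_iff_coeff_zero]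
      intro k hk
      rcases hk.eq_or_lt with rfl | hk
      · simp only [c, leadingCoeff, hTdeg, coeff_sub, coeff_smul, smul_eq_mul, mul_comm, sub_self]
      · simp [coeff_eq_zero_of_natDegree_lt (hdeg.trans_lt hk),
          coeff_eq_zero_of_natDegree_lt (hTdeg.trans_lt hk)]
  rw [sub_eq_zero] at hr
  have hcoeff : p.coeff n = c := by
    simpa [h₁, Chebyshev.T_eval_one] using (congrArg (eval 1) hr).symm
  rw [hcoeff] at hr
  exact smul_right_injective R[X] hc hr

theorem chebyshevOperator_eq_zero_of_pell {n : ℕ} {p : R[X]} (hp' : derivative p ≠ 0)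
    (hpell : (X ^ 2 - 1) * derivative p ^ 2 = C ((n : R) ^ 2) * (p ^ 2 - 1)) :
    chebyshevOperator R n p = 0 := by
  have hder := congrArg derivative hpell
  simp only [derivative_mul, derivative_sub, derivative_pow, derivative_X, derivative_one,
    derivative_C, zero_mul, zero_add, sub_zero, mul_one] at hder
  have h : derivative p * (C 2 * chebyshevOperator R n p) = 0 := by
    rw [chebyshevOperator_apply]
    linear_combination (norm := (simp only [map_pow, map_natCast, map_ofNat]; ring_nf)) -hder
  simpa [hp'] using h

end IsDomain

section Field

variable {K : Type*} [Field K]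

theorem eq_C_leadingCoeff_mul_prod_X_sub_C_pow {ι : Type*} {s : Finset ι} {v : ι → K}
    (hv : Set.InjOn v s) {q : K[X]} {k : ℕ} (hdvd : ∀ i ∈ s, (X - C (v i)) ^ k ∣ q)
    (hdeg : q.natDegree ≤ k * s.card) :
    q = C q.leadingCoeff * (∏ i ∈ s, (X - C (v i))) ^ k := by
  refine eq_leadingCoeff_mul_of_monic_of_dvd_of_natDegree_le ((monic_prod_X_sub_C v s).pow k) ?_
    (by rwa [natDegree_pow, natDegree_finsetProd_X_sub_C_eq_card])
  rw [← Finset.prod_pow]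
  refine Finset.prod_dvd_of_coprime (fun i hi j hj hij => ?_) hdvd
  exact (isCoprime_X_sub_C_of_isUnit_sub
    (sub_ne_zero.mpr ((hv.ne_iff hi hj).mpr hij)).isUnit).pow

variable {p : K[X]} {m : ℕ} {ζ : ℕ → K}

theorem X_sq_sub_one_mul_sq_sub_one_eq (hm : m ≠ 0) (hdeg : p.natDegree = m)
    (hinj : Set.InjOn ζ (Finset.Iic m))
    (hroot : ∀ j ≤ m, ((X ^ 2 - 1) * derivative p).IsRoot (ζ j))
    (hsq : ∀ j ≤ m, p.eval (ζ j) ^ 2 = 1) :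
    (X ^ 2 - 1) * (p ^ 2 - 1) = C (p.leadingCoeff ^ 2) * (∏ j ≤ m, (X - C (ζ j))) ^ 2 := by
  have hder : derivative ((X ^ 2 - 1) * (p ^ 2 - 1))
      = C 2 * X * (p ^ 2 - 1) + C 2 * p * ((X ^ 2 - 1) * derivative p) := by
    simp only [derivative_mul, derivative_sub, derivative_pow, derivative_X, derivative_one,
      Nat.cast_ofNat]
    ring
  have hdvd : ∀ j ≤ m, (X - C (ζ j)) ^ 2 ∣ (X ^ 2 - 1) * (p ^ 2 - 1) := by
    intro j hj
    refine X_sub_C_sq_dvd_of_isRoot_of_isRoot_derivative ?_ ?_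
    · simp [IsRoot, hsq j hj]
    · rw [IsRoot, hder]
      simp [hsq j hj, (hroot j hj).eq_zero]
  have hdegle : ((X ^ 2 - 1) * (p ^ 2 - 1)).natDegree ≤ 2 * (Finset.Iic m).card := by
    refine natDegree_mul_le.trans ?_
    rw [Nat.card_Iic]
    have : (X ^ 2 - 1 : K[X]).natDegree ≤ 2 := by compute_degree
    have : (p ^ 2 - 1).natDegree ≤ 2 * m := (natDegree_sub_le _ _).trans (by simp [hdeg])
    omega
  have := eq_C_leadingCoeff_mul_prod_X_sub_C_pow hinj
    (fun j hj => hdvd j (Finset.mem_Iic.mp hj)) hdegle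
  rwa [leadingCoeff_mul, leadingCoeff_X_pow_sub_one two_pos, one_mul,
    leadingCoeff_sub_of_degree_lt, leadingCoeff_pow] at this
  rw [degree_one, ← natDegree_pos_iff_degree_pos, natDegree_pow, hdeg]
  omega

variable [CharZero K]

theorem X_sq_sub_one_mul_derivative_eq (hm : m ≠ 0) (hdeg : p.natDegree = m)
    (hinj : Set.InjOn ζ (Finset.Iic m))
    (hroot : ∀ j ≤ m, ((X ^ 2 - 1) * derivative p).IsRoot (ζ j)) :
    (X ^ 2 - 1) * derivative p = C (p.leadingCoeff * m) * ∏ j ≤ m, (X - C (ζ j)) := by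
  have hdegle : ((X ^ 2 - 1) * derivative p).natDegree ≤ 1 * (Finset.Iic m).card := by
    refine natDegree_mul_le.trans ?_
    rw [natDegree_derivative, hdeg, Nat.card_Iic]
    have : (X ^ 2 - 1 : K[X]).natDegree ≤ 2 := by compute_degree
    omega
  have := eq_C_leadingCoeff_mul_prod_X_sub_C_pow (k := 1) hinj
    (fun j hj => by rw [pow_one, dvd_iff_isRoot]; exact hroot j (Finset.mem_Iic.mp hj)) hdegle
  rwa [pow_one, leadingCoeff_mul, leadingCoeff_X_pow_sub_one two_pos, one_mul,
    leadingCoeff_derivative, hdeg] at this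

theorem pell_of_forall_sq_eval_eq_one (hm : m ≠ 0) (hdeg : p.natDegree = m)
    (hinj : Set.InjOn ζ (Set.Iic m)) (hζ₀ : ζ 0 = -1) (hζm : ζ m = 1)
    (hcrit : ∀ j, 0 < j → j < m → (derivative p).IsRoot (ζ j))
    (hsq : ∀ j ≤ m, p.eval (ζ j) ^ 2 = 1) :
    (X ^ 2 - 1) * derivative p ^ 2 = C ((m : K) ^ 2) * (p ^ 2 - 1) := by
  replace hinj : Set.InjOn ζ (Finset.Iic m) := by rwa [Finset.coe_Iic]
  have hroot : ∀ j ≤ m, ((X ^ 2 - 1) * derivative p).IsRoot (ζ j) := by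
    intro j hj
    rcases Nat.eq_zero_or_pos j with rfl | hj₀
    · simp [hζ₀]
    rcases hj.eq_or_lt with rfl | hjm
    · simp [hζm]
    simp [(hcrit j hj₀ hjm).eq_zero]
  have hg := X_sq_sub_one_mul_derivative_eq hm hdeg hinj hroot
  have hF := X_sq_sub_one_mul_sq_sub_one_eq hm hdeg hinj hroot hsq
  have h : (X ^ 2 - 1) *
      ((X ^ 2 - 1) * derivative p ^ 2 - C ((m : K) ^ 2) * (p ^ 2 - 1)) = 0 := by
    linear_combination (norm := (simp only [map_mul, map_pow]; ring))
      ((X ^ 2 - 1) * derivative p + C (p.leadingCoeff * m) * ∏ j ≤ m, (X - C (ζ j))) * hg -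
        C ((m : K) ^ 2) * hF
  have hX : (X ^ 2 - 1 : K[X]) ≠ 0 := X_pow_sub_C_ne_zero two_pos 1
  exact sub_eq_zero.mp ((mul_eq_zero.mp h).resolve_left hX)

end Field

end Polynomial

/-- a real polynomial of degree `m ≥ 1` with the equi-oscillation
property on `[-1,1]` equals the Chebyshev polynomial `T m` of the first kind. -/
theorem stmt12 (m : ℕ) (hm : 1 ≤ m) (p : Polynomial ℝ)
    (hdeg : p.natDegree = m)
    (ζ : ℕ → ℝ) (hζ0 : ζ 0 = -1) (hζm : ζ m = 1)
    (hζmono : ∀ i j, i < j → j ≤ m → ζ i < ζ j)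
    (hcrit : ∀ j, 1 ≤ j → j ≤ m - 1 → (derivative p).eval (ζ j) = 0)
    (hvals : ∀ j ≤ m, p.eval (ζ j) = (-1) ^ (m - j)) :
    p = Polynomial.Chebyshev.T ℝ (m : ℤ) := by
  have hinj : Set.InjOn ζ (Set.Iic m) :=
    StrictMonoOn.injOn fun i _ j hj hij => hζmono i j hij hj
  have hsq : ∀ j ≤ m, p.eval (ζ j) ^ 2 = 1 := fun j hj => by
    rw [hvals j hj, ← pow_mul, mul_comm, pow_mul, neg_one_sq, one_pow]
  have hpell := pell_of_forall_sq_eval_eq_one (by omega) hdeg hinj hζ0 hζm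
    (fun j hj₀ hjm => hcrit j hj₀ (by omega)) hsq
  have hp' : derivative p ≠ 0 := derivative_ne_zero.mpr (by omega)
  refine eq_T_of_chebyshevOperator_eq_zero (chebyshevOperator_eq_zero_of_pell hp' hpell) hdeg.le ?_
  simpa [hζm] using hvals m le_rfl
end

section
/- Let m ≥ 2, let z_j = cos((m−j)π/m) for j = 1,...,m−1 be the critical points of T_m in (−1,1), and set z_0 = −1. Then ∏_{i=1}^{m−1}(z_0 − z_i) = m(−1)^{m−1}/2^{m−1}, and for 1 ≤ k ≤ m−1, ∏_{i≠k, 0≤i≤m−1}(z_k − z_i) = m(−1)^{m−1−k}/(2^{m−1}(1 − z_k)). -/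
/-!
The interior extrema `z₁ < ⋯ < z_{m-1}` of `T_m` are the zeros of `T_m' = m U_{m-1}`, so they
are all the roots of `U_{m-1}`, and comparing leading coefficients gives
`U_{m-1} = 2^{m-1} ∏ (X - z_i)`. Evaluating at `z₀ = -1`, where `U_{m-1}(-1) = (-1)^{m-1} m`,
gives the first product. The second is `(z_k + 1)` times the derivative of `∏ (X - z_i)` at
`z_k`, and at a root of `U_{m-1}` the identity `m T_m = X U_{m-1} - (1 - X²) U_{m-1}'` gives
`(1 - z_k²) U_{m-1}'(z_k) = -m T_m(z_k) = -m (-1)^{m-k}`.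
-/

open Polynomial Polynomial.Chebyshev Finset Real

theorem Polynomial.eq_C_leadingCoeff_mul_nodal {R ι : Type*} [CommRing R] [IsDomain R]
    {p : R[X]} {s : Finset ι} {v : ι → R} (hv : Set.InjOn v s) (hdeg : p.natDegree = #s)
    (hroot : ∀ i ∈ s, p.eval (v i) = 0) : p = C p.leadingCoeff * Lagrange.nodal s v := by
  rcases eq_or_ne p 0 with rfl | hp
  · simp
  refine eq_of_degree_le_of_eval_index_eq s hv ?_ ?_ ?_ fun i hi => ?_
  · rw [degree_eq_natDegree hp, hdeg]
  · rw [degree_C_mul (leadingCoeff_ne_zero.mpr hp), Lagrange.degree_nodal,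
      degree_eq_natDegree hp, hdeg]
  · rw [leadingCoeff_mul, leadingCoeff_C, Lagrange.nodal_monic.leadingCoeff, mul_one]
  · rw [hroot i hi, eval_mul, Lagrange.eval_nodal_at_node hi, mul_zero]

namespace Polynomial.Chebyshev

theorem one_sub_sq_mul_eval_derivative_U_of_isRoot {R : Type*} [CommRing R] {n : ℤ} {x : R}
    (hx : (U R n).IsRoot x) :
    (1 - x ^ 2) * (derivative (U R n)).eval x = -(((n + 1 : ℤ) : R) * (T R (n + 1)).eval x) := by
  have h := congr_arg (eval x) (add_one_mul_T_eq_poly_in_U (R := R) n)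
  simp only [eval_mul, eval_sub, eval_add, eval_pow, eval_X, eval_one, eval_intCast,
    hx.eq_zero] at h
  push_cast
  linear_combination h

noncomputable def criticalPoint (m j : ℕ) : ℝ := cos (((m : ℝ) - j) * π / m)

lemma criticalPoint_eq_node {m j : ℕ} (hj : j ≤ m) : criticalPoint m j = node m (m - j) := by
  rw [criticalPoint, node, Nat.cast_sub hj]

lemma criticalPoint_zero {m : ℕ} (hm : m ≠ 0) : criticalPoint m 0 = -1 := by
  rw [criticalPoint_eq_node m.zero_le, Nat.sub_zero, node_eq_neg_one hm]

lemma criticalPoint_self (m : ℕ) : criticalPoint m m = 1 := by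
  rw [criticalPoint_eq_node le_rfl, Nat.sub_self, node_eq_one]

lemma strictMonoOn_criticalPoint (m : ℕ) : StrictMonoOn (criticalPoint m) (Set.Iic m) := by
  intro i hi j hj hij
  rw [criticalPoint_eq_node hi, criticalPoint_eq_node hj]
  exact node_lt (Nat.sub_le m i) (by grind)

lemma eval_T_criticalPoint {m j : ℕ} (hj : j ≤ m) :
    (T ℝ m).eval (criticalPoint m j) = (-1) ^ (m - j) := by
  rw [criticalPoint_eq_node hj, eval_T_real_node (by simp)]

lemma isRoot_U_criticalPoint {m j : ℕ} (hj₀ : 0 < j) (hjm : j < m) :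
    (U ℝ (m - 1 : ℕ)).IsRoot (criticalPoint m j) := by
  have hextr : IsLocalExtr (T ℝ m).eval (criticalPoint m j) := by
    rw [criticalPoint_eq_node hjm.le]
    exact isLocalExtr_T_real (by omega) (by omega) (by omega)
  have hderiv := hextr.deriv_eq_zero
  rw [Polynomial.deriv, T_derivative_eq_U, eval_mul, eval_intCast] at hderiv
  rw [IsRoot, show ((m - 1 : ℕ) : ℤ) = m - 1 by omega]
  simpa [show m ≠ 0 by omega] using hderiv

theorem U_real_eq_C_mul_nodal_criticalPoint (m : ℕ) :
    U ℝ (m - 1 : ℕ) =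
      Polynomial.C (2 ^ (m - 1)) * Lagrange.nodal (Ico 1 m) (criticalPoint m) := by
  have hinj : Set.InjOn (criticalPoint m) (Ico 1 m) :=
    (strictMonoOn_criticalPoint m).injOn.mono fun i hi => by grind
  have h := eq_C_leadingCoeff_mul_nodal hinj (by rw [natDegree_U_natCast, Nat.card_Ico])
    fun i hi => isRoot_U_criticalPoint (mem_Ico.mp hi).1 (mem_Ico.mp hi).2
  rwa [leadingCoeff_U_natCast] at h

theorem prod_criticalPoint_zero_sub {m : ℕ} (hm : m ≠ 0) :
    ∏ i ∈ Ico 1 m, (criticalPoint m 0 - criticalPoint m i) =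
      m * (-1) ^ (m - 1) / 2 ^ (m - 1) := by
  have h := congr_arg (eval (-1)) (U_real_eq_C_mul_nodal_criticalPoint m)
  rw [eval_mul, eval_C, Lagrange.eval_nodal, U_eval_neg_one, Int.cast_negOnePow_natCast] at h
  rw [criticalPoint_zero hm, eq_div_iff (by positivity)]
  push_cast [Nat.one_le_iff_ne_zero.mpr hm] at h
  linear_combination -h

theorem prod_erase_criticalPoint_sub {m k : ℕ} (hk₀ : 1 ≤ k) (hkm : k ≤ m - 1) :
    ∏ i ∈ (range m).erase k, (criticalPoint m k - criticalPoint m i)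
      = m * (-1) ^ (m - 1 - k) / (2 ^ (m - 1) * (1 - criticalPoint m k)) := by
  have hk : k ∈ Ico 1 m := mem_Ico.mpr ⟨hk₀, by omega⟩
  have hsplit : (range m).erase k = insert 0 ((Ico 1 m).erase k) := by ext; simp; omega
  have hU' : (derivative (U ℝ (m - 1 : ℕ))).eval (criticalPoint m k)
      = 2 ^ (m - 1) * ∏ i ∈ (Ico 1 m).erase k, (criticalPoint m k - criticalPoint m i) := by
    rw [U_real_eq_C_mul_nodal_criticalPoint, derivative_C_mul, eval_mul, eval_C,
      Lagrange.eval_nodal_derivative_eval_node_eq hk, Lagrange.eval_nodal]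
  have hT := one_sub_sq_mul_eval_derivative_U_of_isRoot
    (isRoot_U_criticalPoint (m := m) hk₀ (by omega))
  rw [show ((m - 1 : ℕ) : ℤ) + 1 = m by omega, Int.cast_natCast,
    eval_T_criticalPoint (by omega), hU'] at hT
  have hzk : criticalPoint m k < 1 := criticalPoint_self m ▸
    strictMonoOn_criticalPoint m (Set.mem_Iic.mpr (by omega)) (Set.mem_Iic.mpr le_rfl) (by omega)
  have hsign : (-1 : ℝ) ^ (m - k) = -(-1) ^ (m - 1 - k) := by
    rw [show m - k = m - 1 - k + 1 by omega, pow_succ, mul_neg_one]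
  rw [hsplit, prod_insert (by simp), criticalPoint_zero (by omega), eq_div_iff (by
    have := sub_pos.mpr hzk; positivity)]
  rw [hsign] at hT
  linear_combination hT

end Polynomial.Chebyshev

/-- with `z j = cos((m-j)π/m)` (so `z 0 = -1`), the critical
points of `T m`, one has `∏_{i=1}^{m-1} (z 0 - z i) = m (-1)^{m-1} / 2^{m-1}`
and, for `1 ≤ k ≤ m-1`,
`∏_{i≠k, 0 ≤ i ≤ m-1} (z k - z i) = m (-1)^{m-1-k} / (2^{m-1} (1 - z k))`. -/
theorem stmt14 (m : ℕ) (hm : 2 ≤ m)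
    (z : ℕ → ℝ) (hz : ∀ j, z j = Real.cos (((m : ℝ) - j) * π / m)) :
    (∏ i ∈ Ico 1 m, (z 0 - z i) = m * (-1) ^ (m - 1) / 2 ^ (m - 1)) ∧
    (∀ k, 1 ≤ k → k ≤ m - 1 →
      ∏ i ∈ (range m).erase k, (z k - z i)
        = m * (-1) ^ (m - 1 - k) / (2 ^ (m - 1) * (1 - z k))) := by
  obtain rfl : z = criticalPoint m := funext hz
  exact ⟨prod_criticalPoint_zero_sub (by omega),
    fun _ hk₀ hkm => prod_erase_criticalPoint_sub hk₀ hkm⟩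
end

section
/- Let γ > 1, m ≥ 2, β = β(m,γ) > 0 the solution of cosh((2m−1)β)/cosh β = γ, and K = 1/(2 sinh² β). Then 2(m−1)²/(cosh^{−1}γ)² − 1 ≤ K ≤ 2m²/(cosh^{−1}γ)². Consequently lim_{m→∞} K(m,γ)/m² = 2/(cosh^{−1}γ)². -/
/-!
Write `A = cosh⁻¹ γ` and `b = β(m, γ)`. Since `cosh((2m-1)b) = cosh A · cosh b` lies between
`cosh A` and `cosh A · cosh b + sinh A · sinh b = cosh (A + b)`, one gets
`A ≤ (2m-1) b ≤ A + b`, hence `A / (2m) ≤ b ≤ A / (2m-2)`. The elementary inequalities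
`x ≤ sinh x ≤ x cosh x` give `1/x² - 1 ≤ 1/sinh² x ≤ 1/x²` for `x > 0`, and together these
squeeze `K = 1/(2 sinh² b)` between `2(m-1)²/A² - 1` and `2m²/A²`; dividing by `m²` gives the limit.
-/

open Filter Topology

namespace Real

lemma sinh_le_mul_cosh {x : ℝ} (hx : 0 ≤ x) : sinh x ≤ x * cosh x := by
  have h := (convex_Icc 0 x).image_sub_le_mul_sub_of_deriv_le continuous_sinh.continuousOn
    differentiable_sinh.differentiableOn (C := cosh x) ?_ 0 ⟨le_rfl, hx⟩ x ⟨hx, le_rfl⟩ hx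
  · rw [mul_comm]
    simpa using h
  · intro y hy
    rw [interior_Icc] at hy
    rw [deriv_sinh, cosh_le_cosh, abs_of_pos hy.1, abs_of_nonneg hx]
    exact hy.2.le

lemma one_div_sinh_sq_le_one_div_sq {x : ℝ} (hx : 0 < x) : 1 / sinh x ^ 2 ≤ 1 / x ^ 2 :=
  one_div_le_one_div_of_le (by positivity) (pow_le_pow_left₀ hx.le (self_le_sinh_iff.2 hx.le) 2)

lemma one_div_sq_sub_one_le_one_div_sinh_sq {x : ℝ} (hx : 0 < x) :
    1 / x ^ 2 - 1 ≤ 1 / sinh x ^ 2 := by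
  have hs : 0 < sinh x := sinh_pos_iff.2 hx
  have hsq : sinh x ^ 2 ≤ x ^ 2 * (1 + sinh x ^ 2) := by
    rw [← cosh_sq', ← mul_pow]
    exact pow_le_pow_left₀ hs.le (sinh_le_mul_cosh hx.le) 2
  rw [div_sub_one (by positivity), div_le_div_iff₀ (by positivity) (by positivity)]
  linarith

lemma le_and_le_add_of_cosh_eq_cosh_mul_cosh {A b x : ℝ} (hA : 0 ≤ A) (hb : 0 ≤ b)
    (hx : 0 ≤ x) (h : cosh x = cosh A * cosh b) : A ≤ x ∧ x ≤ A + b := by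
  constructor
  · have : cosh A ≤ cosh x := h ▸ le_mul_of_one_le_right (cosh_pos A).le (one_le_cosh b)
    simpa [cosh_le_cosh, abs_of_nonneg hA, abs_of_nonneg hx] using this
  · have : cosh x ≤ cosh (A + b) := by
      rw [h, cosh_add]
      have := mul_nonneg (sinh_nonneg_iff.2 hA) (sinh_nonneg_iff.2 hb)
      linarith
    simpa [cosh_le_cosh, abs_of_nonneg hx, abs_of_nonneg (add_nonneg hA hb)] using this

lemma one_div_two_sinh_sq_bounds {M A b : ℝ} (hM : 1 ≤ M) (hA : 0 < A) (hb : 0 < b)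
    (h : cosh ((2 * M - 1) * b) = cosh A * cosh b) :
    2 * (M - 1) ^ 2 / A ^ 2 - 1 ≤ 1 / (2 * sinh b ^ 2) ∧
      1 / (2 * sinh b ^ 2) ≤ 2 * M ^ 2 / A ^ 2 := by
  obtain ⟨hAle, hleA⟩ :=
    le_and_le_add_of_cosh_eq_cosh_mul_cosh hA.le hb.le (by nlinarith) h
  have hhalf : ∀ y : ℝ, 1 / (2 * y) = 1 / y / 2 := fun y => by ring
  constructor
  · have hlow := one_div_sq_sub_one_le_one_div_sinh_sq hb
    have hb' : 2 * (M - 1) * b ≤ A := by linarith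
    have : 2 * (M - 1) ^ 2 / A ^ 2 ≤ 1 / (2 * b ^ 2) := by
      rw [div_le_div_iff₀ (by positivity) (by positivity)]
      nlinarith [pow_le_pow_left₀ (by nlinarith) hb' 2]
    rw [hhalf] at this ⊢
    linarith
  · have hb' : A ≤ 2 * M * b := by linarith
    calc 1 / (2 * sinh b ^ 2) ≤ 1 / (2 * b ^ 2) := by
          rw [hhalf, hhalf]; linarith [one_div_sinh_sq_le_one_div_sq hb]
      _ ≤ 2 * M ^ 2 / A ^ 2 := by
          rw [div_le_div_iff₀ (by positivity) (by positivity)]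
          nlinarith [pow_le_pow_left₀ hA.le hb' 2]

end Real

lemma tendsto_div_sq_of_le_of_le {f : ℕ → ℝ} {c : ℝ}
    (hlow : ∀ᶠ m : ℕ in atTop, c * ((m : ℝ) - 1) ^ 2 - 1 ≤ f m)
    (hup : ∀ᶠ m : ℕ in atTop, f m ≤ c * (m : ℝ) ^ 2) :
    Tendsto (fun m : ℕ => f m / (m : ℝ) ^ 2) atTop (𝓝 c) := by
  have hinv : Tendsto (fun m : ℕ => 1 / (m : ℝ)) atTop (𝓝 0) :=
    tendsto_one_div_atTop_nhds_zero_nat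
  have hL : Tendsto (fun m : ℕ => (c * ((m : ℝ) - 1) ^ 2 - 1) / (m : ℝ) ^ 2) atTop (𝓝 c) := by
    have := (tendsto_const_nhds (x := c)).mul ((tendsto_const_nhds (x := (1 : ℝ)).sub hinv).pow 2)
      |>.sub (hinv.pow 2)
    rw [show c * (1 - 0) ^ 2 - 0 ^ 2 = c by ring] at this
    refine this.congr' ?_
    filter_upwards [eventually_ge_atTop 1] with m hm
    have : (m : ℝ) ≠ 0 := by positivity
    field_simp
  have hU : Tendsto (fun m : ℕ => c * (m : ℝ) ^ 2 / (m : ℝ) ^ 2) atTop (𝓝 c) := by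
    refine tendsto_const_nhds.congr' ?_
    filter_upwards [eventually_ge_atTop 1] with m hm
    have : (m : ℝ) ≠ 0 := by positivity
    field_simp
  refine tendsto_of_tendsto_of_tendsto_of_le_of_le' hL hU ?_ ?_
  · filter_upwards [hlow] with m hm using by gcongr
  · filter_upwards [hup] with m hm using by gcongr

/-- with `β = β(m,γ) > 0` the solution of
`cosh((2m-1)β)/cosh β = γ` and `K = 1/(2 sinh² β)`, one has
`2(m-1)²/A² - 1 ≤ K ≤ 2m²/A²` where `A = cosh⁻¹ γ`; consequently
`K(m,γ)/m² → 2/A²` as `m → ∞`. -/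
theorem stmt16 (γ : ℝ) (hγ : 1 < γ)
    (A : ℝ) (hA : 0 ≤ A) (hAγ : Real.cosh A = γ)
    (β : ℕ → ℝ) (hβpos : ∀ m, 2 ≤ m → 0 < β m)
    (hβγ : ∀ m, 2 ≤ m → Real.cosh ((2 * m - 1) * β m) / Real.cosh (β m) = γ)
    (K : ℕ → ℝ) (hK : ∀ m, K m = 1 / (2 * Real.sinh (β m) ^ 2)) :
    (∀ m : ℕ, 2 ≤ m →
      2 * ((m : ℝ) - 1) ^ 2 / A ^ 2 - 1 ≤ K m ∧ K m ≤ 2 * (m : ℝ) ^ 2 / A ^ 2) ∧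
    Tendsto (fun m : ℕ => K m / (m : ℝ) ^ 2) atTop (nhds (2 / A ^ 2)) := by
  have hA0 : 0 < A := hA.lt_of_ne <| by rintro rfl; simp at hAγ; linarith
  have bounds : ∀ m : ℕ, 2 ≤ m →
      2 * ((m : ℝ) - 1) ^ 2 / A ^ 2 - 1 ≤ K m ∧ K m ≤ 2 * (m : ℝ) ^ 2 / A ^ 2 := by
    intro m hm
    rw [hK]
    refine Real.one_div_two_sinh_sq_bounds (by exact_mod_cast one_le_two.trans hm) hA0
      (hβpos m hm) ?_
    rw [hAγ, ← hβγ m hm, div_mul_cancel₀ _ (Real.cosh_pos _).ne']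
  refine ⟨bounds, tendsto_div_sq_of_le_of_le ?_ ?_⟩
  · filter_upwards [eventually_ge_atTop 2] with m hm
    simpa only [div_mul_eq_mul_div] using (bounds m hm).1
  · filter_upwards [eventually_ge_atTop 2] with m hm
    simpa only [div_mul_eq_mul_div] using (bounds m hm).2
end

section
/- Let γ > 1, σ = π²/(cosh^{−1}γ)², and for m ≥ 2 let x_j^{(m)} = 1 + 2K(m,γ) sin²(jπ/(2m)) for 1 ≤ j ≤ m−1, where K(m,γ) ≤ 2m²/(cosh^{−1}γ)². Then for all m and all 1 ≤ j ≤ m−1, x_j^{(m)} ≤ 1 + σ j², and for each fixed j ≥ 1, lim_{m→∞} x_j^{(m)} = 1 + σ j². -/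
/-!
Write `b = β m` and `γ = cosh A`. The defining equation says `cosh ((2m-1) b) = cosh A cosh b`,
which lies between `cosh A` and `cosh (A + b)`; hence `A ≤ (2m-1) b ≤ A + b`, i.e.
`A ≤ 2 m b ≤ A + 2 b`. So `b → 0`, `2 m b → A`, and
`x_j^{(m)} - 1 = (sin (jπ/(2m)) / sinh b)²`. Since `|sin t| ≤ |t|` and `b ≤ sinh b`, this is at most
`(jπ / (2 m b))² ≤ (jπ/A)² = σ j²`, and because `sin t ~ t`, `sinh b ~ b`, it tends to `(jπ/A)²`.
-/

open Filter Real Topology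

theorem le_of_cosh_eq_cosh_mul_cosh {a b y : ℝ} (hy : 0 ≤ y)
    (h : cosh y = cosh a * cosh b) : a ≤ y := by
  have : cosh a ≤ cosh y := by
    rw [h]; exact le_mul_of_one_le_right (cosh_pos a).le (one_le_cosh b)
  exact (le_abs_self a).trans (by simpa [abs_of_nonneg hy] using cosh_le_cosh.mp this)

theorem le_add_of_cosh_eq_cosh_mul_cosh {a b y : ℝ} (ha : 0 ≤ a) (hb : 0 ≤ b) (hy : 0 ≤ y)
    (h : cosh y = cosh a * cosh b) : y ≤ a + b := by
  have : cosh y ≤ cosh (a + b) := by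
    rw [h, cosh_add]
    exact le_add_of_nonneg_right (mul_nonneg (sinh_nonneg_iff.mpr ha) (sinh_nonneg_iff.mpr hb))
  simpa [abs_of_nonneg hy, abs_of_nonneg (add_nonneg ha hb)] using cosh_le_cosh.mp this

theorem le_two_mul_mul_le_of_cosh_eq {A b m : ℝ} (hA : 0 ≤ A) (hb : 0 ≤ b) (hm : 1 ≤ 2 * m)
    (h : cosh ((2 * m - 1) * b) = cosh A * cosh b) : A ≤ 2 * m * b ∧ 2 * m * b ≤ A + 2 * b := by
  have hy : 0 ≤ (2 * m - 1) * b := mul_nonneg (by linarith) hb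
  have hlow := le_of_cosh_eq_cosh_mul_cosh hy h
  have hup := le_add_of_cosh_eq_cosh_mul_cosh hA hb hy h
  constructor <;> linarith

theorem tendsto_zero_of_two_mul_mul_le {A : ℝ} {b : ℕ → ℝ}
    (hb : ∀ᶠ m in atTop, 0 ≤ b m ∧ 2 * m * b m ≤ A + 2 * b m) : Tendsto b atTop (𝓝 0) := by
  refine squeeze_zero' (hb.mono fun m h => h.1) ?_ (tendsto_const_div_atTop_nhds_zero_nat A)
  filter_upwards [hb, eventually_ge_atTop 2] with m ⟨hb0, hbA⟩ hm
  have hm' : (2 : ℝ) ≤ m := by exact_mod_cast hm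
  rw [le_div_iff₀ (by positivity)]
  nlinarith

theorem tendsto_two_mul_mul_of_le {A : ℝ} {b : ℕ → ℝ}
    (hb : ∀ᶠ m in atTop, 0 ≤ b m ∧ A ≤ 2 * m * b m ∧ 2 * m * b m ≤ A + 2 * b m) :
    Tendsto (fun m : ℕ => 2 * m * b m) atTop (𝓝 A) := by
  have hb0 : Tendsto b atTop (𝓝 0) :=
    tendsto_zero_of_two_mul_mul_le (hb.mono fun m h => ⟨h.1, h.2.2⟩)
  have hup : Tendsto (fun m => A + 2 * b m) atTop (𝓝 A) := by
    simpa using tendsto_const_nhds.add (hb0.const_mul 2)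
  exact tendsto_of_tendsto_of_tendsto_of_le_of_le' tendsto_const_nhds hup
    (hb.mono fun m h => h.2.1) (hb.mono fun m h => h.2.2)

theorem sq_sin_div_sinh_le {t b : ℝ} (hb : 0 < b) : (sin t / sinh b) ^ 2 ≤ (t / b) ^ 2 := by
  rw [div_pow, div_pow]
  exact div_le_div₀ (sq_nonneg t) sin_sq_le_sq (by positivity)
    (pow_le_pow_left₀ hb.le (self_le_sinh_iff.mpr hb.le) 2)

theorem tendsto_div_self_of_hasDerivAt {f : ℝ → ℝ} (hf : HasDerivAt f 1 0) (hf0 : f 0 = 0) :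
    Tendsto (fun x => f x / x) (𝓝[≠] 0) (𝓝 1) := by
  refine (hasDerivAt_iff_tendsto_slope.mp hf).congr fun x => ?_
  simp [slope_def_field, hf0]

theorem tendsto_div_of_hasDerivAt {ι : Type*} {l : Filter ι} {f g : ℝ → ℝ} {u v : ι → ℝ} {c : ℝ}
    (hf : HasDerivAt f 1 0) (hf0 : f 0 = 0) (hg : HasDerivAt g 1 0) (hg0 : g 0 = 0)
    (hu : Tendsto u l (𝓝[≠] 0)) (hv : Tendsto v l (𝓝[≠] 0))
    (huv : Tendsto (fun n => u n / v n) l (𝓝 c)) :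
    Tendsto (fun n => f (u n) / g (v n)) l (𝓝 c) := by
  have h := (((tendsto_div_self_of_hasDerivAt hf hf0).comp hu).mul huv).div
    ((tendsto_div_self_of_hasDerivAt hg hg0).comp hv) one_ne_zero
  rw [one_mul, div_one] at h
  refine h.congr' ?_
  filter_upwards [hu.eventually self_mem_nhdsWithin, hv.eventually self_mem_nhdsWithin]
    with n (hun : u n ≠ 0) (hvn : v n ≠ 0)
  simp only [Pi.div_apply, Function.comp_apply]
  field_simp

theorem tendsto_sin_div_two_mul_div_sinh {A c : ℝ} {b : ℕ → ℝ} (hA : A ≠ 0) (hc : c ≠ 0)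
    (hb : ∀ᶠ m in atTop, 0 < b m ∧ A ≤ 2 * m * b m ∧ 2 * m * b m ≤ A + 2 * b m) :
    Tendsto (fun m : ℕ => sin (c / (2 * m)) / sinh (b m)) atTop (𝓝 (c / A)) := by
  refine tendsto_div_of_hasDerivAt (by simpa using hasDerivAt_sin 0) sin_zero
    (by simpa using hasDerivAt_sinh 0) sinh_zero ?_ ?_ ?_
  · refine tendsto_nhdsWithin_iff.mpr ⟨tendsto_const_nhds.div_atTop
      (tendsto_natCast_atTop_atTop.const_mul_atTop two_pos), ?_⟩
    filter_upwards [eventually_ne_atTop 0] with m hm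
    exact div_ne_zero hc (mul_ne_zero two_ne_zero (Nat.cast_ne_zero.mpr hm))
  · refine tendsto_nhdsWithin_iff.mpr ⟨tendsto_zero_of_two_mul_mul_le (A := A) ?_, ?_⟩
    · filter_upwards [hb] with m hm using ⟨hm.1.le, hm.2.2⟩
    · filter_upwards [hb] with m hm using hm.1.ne'
  · simp_rw [div_div]
    refine tendsto_const_nhds.div (tendsto_two_mul_mul_of_le ?_) hA
    filter_upwards [hb] with m hm using ⟨hm.1.le, hm.2⟩

/-- with `σ = π²/A²` (`A = cosh⁻¹ γ`) and
`x_j^{(m)} = 1 + 2 K(m,γ) sin²(jπ/(2m))` where `K(m,γ) = 1/(2 sinh² β(m,γ))`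
and `β(m,γ)` solves `cosh((2m-1)β)/cosh β = γ`: for all `m ≥ 2` and
`1 ≤ j ≤ m-1`, `x_j^{(m)} ≤ 1 + σ j²`, and for each fixed `j ≥ 1`,
`x_j^{(m)} → 1 + σ j²` as `m → ∞`. -/
theorem stmt17 (γ : ℝ) (hγ : 1 < γ)
    (A : ℝ) (hA : 0 ≤ A) (hAγ : Real.cosh A = γ)
    (σ : ℝ) (hσ : σ = π ^ 2 / A ^ 2)
    (β : ℕ → ℝ) (hβpos : ∀ m : ℕ, 2 ≤ m → 0 < β m)
    (hβγ : ∀ m : ℕ, 2 ≤ m → Real.cosh ((2 * m - 1) * β m) / Real.cosh (β m) = γ)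
    (K : ℕ → ℝ) (hK : ∀ m, K m = 1 / (2 * Real.sinh (β m) ^ 2))
    (x : ℕ → ℕ → ℝ)
    (hx : ∀ m j, x m j = 1 + 2 * K m * Real.sin (j * π / (2 * m)) ^ 2) :
    (∀ m : ℕ, 2 ≤ m → ∀ j : ℕ, 1 ≤ j → j ≤ m - 1 → x m j ≤ 1 + σ * j ^ 2) ∧
    (∀ j : ℕ, 1 ≤ j →
      Tendsto (fun m : ℕ => x m j) atTop (nhds (1 + σ * j ^ 2))) := by
  have hA0 : 0 < A := hA.lt_of_ne <| by rintro rfl; rw [cosh_zero] at hAγ; linarith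
  have hbounds : ∀ m : ℕ, 2 ≤ m → A ≤ 2 * m * β m ∧ 2 * m * β m ≤ A + 2 * β m :=
    fun m hm => le_two_mul_mul_le_of_cosh_eq hA (hβpos m hm).le (by norm_cast; omega) <| by
      rw [hAγ, ← hβγ m hm, div_mul_cancel₀ _ (cosh_pos _).ne']
  have hxm : ∀ m j, x m j = 1 + (sin (j * π / (2 * m)) / sinh (β m)) ^ 2 := fun m j => by
    rw [hx, hK]; ring
  have hσj : ∀ j : ℕ, σ * j ^ 2 = (j * π / A) ^ 2 := fun j => by rw [hσ]; ring
  refine ⟨fun m hm j _ _ => ?_, fun j hj => ?_⟩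
  · rw [hxm, hσj, add_le_add_iff_left]
    refine (sq_sin_div_sinh_le (hβpos m hm)).trans
      (pow_le_pow_left₀ (div_nonneg (by positivity) (hβpos m hm).le) ?_ 2)
    rw [div_div]
    exact div_le_div_of_nonneg_left (by positivity) hA0 (hbounds m hm).1
  · simp_rw [hxm, hσj]
    refine tendsto_const_nhds.add (Tendsto.pow (tendsto_sin_div_two_mul_div_sinh hA0.ne'
      (mul_pos (Nat.cast_pos.mpr hj) pi_pos).ne' ?_) 2)
    filter_upwards [eventually_ge_atTop 2] with m hm using ⟨hβpos m hm, hbounds m hm⟩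
end

section
/- Let γ > 1, β = β(m,γ) the solution of cosh((2m−1)β)/cosh β = γ, and η_m = sinh(2mβ)/((2 sinh β)^{2m−1} cosh β). Then lim_{m→∞} η_m^{1/m}/m² = 1/(cosh^{−1}γ)². -/
/-!
From `cosh ((2m-1)β) = γ cosh β ≤ γ e^β` and `e^t ≤ 2 cosh t` one gets `(2m-2)β ≤ log 2γ`, so
`β → 0`; then `cosh ((2m-1)β) → γ`, hence `(2m-1)β → A`, `2mβ → A` and `c := 2m sinh β → A`.
Since `η = (sinh (2mβ) c / (m cosh β)) (m / c)^{2m}`, we get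
`η^{1/m} / m² = X^{1/m} / m^{1/m} / c²` with `X = sinh (2mβ) c / cosh β → A sinh A > 0`,
and both `X^{1/m}` and `m^{1/m}` tend to `1`.
-/

open Filter Topology

namespace Real

theorem tendsto_sinh_div_self : Tendsto (fun x => sinh x / x) (𝓝[≠] 0) (𝓝 1) := by
  have h := hasDerivAt_sinh 0
  rw [cosh_zero, hasDerivAt_iff_tendsto_slope] at h
  refine h.congr fun x => ?_
  simp [slope_def_field]

theorem tendsto_of_tendsto_cosh {α : Type*} {l : Filter α} {t : α → ℝ} {a : ℝ}
    (ht : ∀ᶠ x in l, 0 ≤ t x) (ha : 0 < a)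
    (h : Tendsto (fun x => cosh (t x)) l (𝓝 (cosh a))) : Tendsto t l (𝓝 a) := by
  have hcont : ContinuousAt arcosh (cosh a) :=
    continuousOn_arcosh.continuousAt (Ici_mem_nhds (one_lt_cosh.2 ha.ne'))
  have := hcont.tendsto.comp h
  rw [arcosh_cosh ha.le] at this
  exact this.congr' (ht.mono fun x hx => arcosh_cosh hx)

theorem sub_one_mul_le_log_of_cosh_mul_eq {k b γ : ℝ} (hb : 0 ≤ b)
    (h : cosh (k * b) = γ * cosh b) : (k - 1) * b ≤ log (2 * γ) := by
  have hγ : 0 < γ := pos_of_mul_pos_left (h ▸ cosh_pos _) (cosh_pos b).le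
  have hexp : exp (k * b) ≤ 2 * γ * exp b := by
    have h1 : exp (k * b) ≤ 2 * cosh (k * b) := by
      rw [cosh_eq]; linarith [exp_pos (-(k * b))]
    have h2 : cosh b ≤ exp b := by
      rw [cosh_eq]; linarith [exp_le_exp.2 (by linarith : -b ≤ b)]
    rw [h] at h1
    nlinarith
  rw [le_log_iff_exp_le (by positivity), sub_one_mul, exp_sub]
  exact (div_le_iff₀ (exp_pos b)).2 hexp

end Real

theorem tendsto_rpow_one_div_natCast {u : ℕ → ℝ} {a : ℝ} (hu : Tendsto u atTop (𝓝 a))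
    (ha : a ≠ 0) : Tendsto (fun m : ℕ => u m ^ (1 / (m : ℝ))) atTop (𝓝 1) := by
  simpa using hu.rpow tendsto_one_div_atTop_nhds_zero_nat (Or.inl ha)

theorem tendsto_natCast_rpow_one_div :
    Tendsto (fun m : ℕ => (m : ℝ) ^ (1 / (m : ℝ))) atTop (𝓝 1) :=
  tendsto_rpow_div.comp tendsto_natCast_atTop_atTop

theorem div_pow_mul_rpow_one_div_div_sq {s b k : ℝ} {m : ℕ} (hs : 0 < s) (hb : 0 < b)
    (hk : 0 < k) (hm : m ≠ 0) :
    (s / (b ^ (2 * m - 1) * k)) ^ (1 / (m : ℝ)) / (m : ℝ) ^ 2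
      = (s * (m * b) / k) ^ (1 / (m : ℝ)) / (m : ℝ) ^ (1 / (m : ℝ)) / (m * b) ^ 2 := by
  have hm' : (0 : ℝ) < m := by positivity
  have hsplit : s / (b ^ (2 * m - 1) * k) = s * (m * b) / k / m / (b ^ 2) ^ m := by
    have hpow : b ^ (2 * m) = b ^ (2 * m - 1) * b := by
      rw [← pow_succ, Nat.sub_add_cancel (by omega)]
    rw [← pow_mul, hpow]
    field_simp
  rw [hsplit, Real.div_rpow (by positivity) (by positivity), Real.div_rpow (by positivity) hm'.le,
    one_div, Real.pow_rpow_inv_natCast (by positivity) hm, mul_pow]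
  ring

section

variable {γ : ℝ} {β : ℕ → ℝ} (hβ : ∀ᶠ m in atTop, 0 < β m)
  (hcosh : ∀ᶠ m : ℕ in atTop, Real.cosh ((2 * m - 1) * β m) = γ * Real.cosh (β m))
include hβ hcosh

theorem tendsto_zero_of_cosh_mul_eq : Tendsto β atTop (𝓝 0) := by
  have hbound : ∀ᶠ m : ℕ in atTop, β m ≤ Real.log (2 * γ) / (2 * m - 2) := by
    filter_upwards [hβ, hcosh, eventually_ge_atTop 2] with m hβm hm hm2
    have hm2' : (2 : ℝ) ≤ m := by exact_mod_cast hm2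
    rw [le_div_iff₀ (by linarith)]
    linarith [Real.sub_one_mul_le_log_of_cosh_mul_eq hβm.le hm]
  refine squeeze_zero' (hβ.mono fun _ => le_of_lt) hbound (tendsto_const_nhds.div_atTop ?_)
  exact tendsto_atTop_add_const_right _ _ (tendsto_natCast_atTop_atTop.const_mul_atTop two_pos)

theorem tendsto_two_mul_natCast_mul_of_cosh_mul_eq {A : ℝ} (hA : 0 < A) (hAγ : Real.cosh A = γ) :
    Tendsto (fun m : ℕ => 2 * m * β m) atTop (𝓝 A) := by
  have hβ0 := tendsto_zero_of_cosh_mul_eq hβ hcosh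
  have hcoshβ : Tendsto (fun m => γ * Real.cosh (β m)) atTop (𝓝 (Real.cosh A)) := by
    simpa [hAγ] using ((Real.continuous_cosh.tendsto 0).comp hβ0).const_mul γ
  have ht : Tendsto (fun m : ℕ => (2 * m - 1) * β m) atTop (𝓝 A) := by
    refine Real.tendsto_of_tendsto_cosh ?_ hA (hcoshβ.congr' (hcosh.mono fun _ h => h.symm))
    filter_upwards [hβ, eventually_ge_atTop 1] with m hβm hm
    have hm' : (1 : ℝ) ≤ m := by exact_mod_cast hm
    nlinarith
  simpa [sub_mul, one_mul] using ht.add hβ0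

theorem tendsto_natCast_mul_two_mul_sinh_of_cosh_mul_eq {A : ℝ} (hA : 0 < A)
    (hAγ : Real.cosh A = γ) :
    Tendsto (fun m : ℕ => m * (2 * Real.sinh (β m))) atTop (𝓝 A) := by
  have hβ0 : Tendsto β atTop (𝓝[≠] 0) :=
    tendsto_nhdsWithin_iff.2 ⟨tendsto_zero_of_cosh_mul_eq hβ hcosh, hβ.mono fun _ h => h.ne'⟩
  have := (tendsto_two_mul_natCast_mul_of_cosh_mul_eq hβ hcosh hA hAγ).mul
    (Real.tendsto_sinh_div_self.comp hβ0)
  rw [mul_one] at this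
  refine this.congr' (hβ.mono fun m hβm => ?_)
  simp only [Function.comp_apply]
  field_simp

end

/-- with `β(m,γ)` the solution of `cosh((2m-1)β)/cosh β = γ` and
`η_m = sinh(2mβ)/((2 sinh β)^{2m-1} cosh β)`, one has
`η_m^{1/m}/m² → 1/A²` as `m → ∞`, where `A = cosh⁻¹ γ`. -/
theorem stmt18 (γ : ℝ) (hγ : 1 < γ)
    (A : ℝ) (hA : 0 ≤ A) (hAγ : Real.cosh A = γ)
    (β : ℕ → ℝ) (hβpos : ∀ m : ℕ, 2 ≤ m → 0 < β m)
    (hβγ : ∀ m : ℕ, 2 ≤ m → Real.cosh ((2 * m - 1) * β m) / Real.cosh (β m) = γ)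
    (η : ℕ → ℝ)
    (hη : ∀ m : ℕ, η m = Real.sinh (2 * m * β m)
        / ((2 * Real.sinh (β m)) ^ (2 * m - 1) * Real.cosh (β m))) :
    Tendsto (fun m : ℕ => (η m) ^ ((1 : ℝ) / m) / (m : ℝ) ^ 2)
      atTop (nhds (1 / A ^ 2)) := by
  have hA0 : 0 < A := hA.lt_of_ne (by rintro rfl; simp at hAγ; linarith)
  have hβ : ∀ᶠ m in atTop, 0 < β m := eventually_atTop.2 ⟨2, hβpos⟩
  have hcosh : ∀ᶠ m : ℕ in atTop, Real.cosh ((2 * m - 1) * β m) = γ * Real.cosh (β m) :=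
    eventually_atTop.2 ⟨2, fun m hm => by
      rw [← hβγ m hm, div_mul_cancel₀ _ (Real.cosh_pos _).ne']⟩
  have hc := tendsto_natCast_mul_two_mul_sinh_of_cosh_mul_eq hβ hcosh hA0 hAγ
  have hX : Tendsto (fun m : ℕ => Real.sinh (2 * m * β m) * (m * (2 * Real.sinh (β m)))
      / Real.cosh (β m)) atTop (𝓝 (Real.sinh A * A / Real.cosh 0)) :=
    (((Real.continuous_sinh.tendsto A).comp
      (tendsto_two_mul_natCast_mul_of_cosh_mul_eq hβ hcosh hA0 hAγ)).mul hc).div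
      ((Real.continuous_cosh.tendsto 0).comp (tendsto_zero_of_cosh_mul_eq hβ hcosh))
      (Real.cosh_pos 0).ne'
  have hlim := ((tendsto_rpow_one_div_natCast hX (by positivity [Real.sinh_pos_iff.2 hA0])).div
    tendsto_natCast_rpow_one_div one_ne_zero).div (hc.pow 2) (by positivity)
  rw [div_one] at hlim
  refine hlim.congr' ?_
  filter_upwards [hβ, eventually_ge_atTop 1] with m hβm hm
  rw [hη, div_pow_mul_rpow_one_div_div_sq (Real.sinh_pos_iff.2 (by positivity))
    (by positivity [Real.sinh_pos_iff.2 hβm]) (Real.cosh_pos _) (by omega)]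
  rfl
end

section
/- Let σ > 0 be a real number, m ≥ 2, K = K(m) satisfy K ≤ 2m²σ/π², and define x_j = 1 + 2K sin²(jπ/(2m)) for 0 ≤ j ≤ m−1 and w_j = 1 + σ j². Then for all 0 ≤ j ≤ m−2, w_{j+1}/x_{j+1} ≥ w_j/x_j, i.e., the sequence (w_1,...,w_{m−1}) is subordinate to (x_1,...,x_{m−1}). -/
/-!
Write `θ = π / (2m)`, so that `x j = 1 + 2K sin²(jθ)`. Comparing `w j / x j` with
`w (j+1) / x (j+1)` splits into two inequalities. The increments of `x` are controlled
by those of `w`: `sin²((j+1)θ) - sin²(jθ) = sin((2j+1)θ) sin θ ≤ (2j+1)θ²`, and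
`2Kθ² ≤ σ` is exactly the hypothesis on `K`. The cross terms are controlled because
`sin t / t` is nonincreasing on `[0, π]` (concavity of `sin`), which gives
`j sin((j+1)θ) ≤ (j+1) sin(jθ)`.
-/

open Real

theorem one_add_div_one_add_le {a b p q : ℝ} (hp : 0 < 1 + p) (hq : 0 < 1 + q)
    (hsub : q - p ≤ b - a) (hmul : a * q ≤ b * p) :
    (1 + a) / (1 + p) ≤ (1 + b) / (1 + q) := by
  rw [div_le_div_iff₀ hp hq]
  linarith

namespace Real

theorem sin_sq_sub_sin_sq (x y : ℝ) : sin x ^ 2 - sin y ^ 2 = sin (x + y) * sin (x - y) := by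
  rw [sin_add, sin_sub]
  linear_combination (-sin x ^ 2) * sin_sq_add_cos_sq y + sin y ^ 2 * sin_sq_add_cos_sq x

theorem sin_sq_succ_mul_sub_sin_sq_mul_le (n : ℕ) (θ : ℝ) :
    sin ((n + 1) * θ) ^ 2 - sin (n * θ) ^ 2 ≤ (2 * n + 1) * θ ^ 2 := by
  rw [sin_sq_sub_sin_sq, show (n + 1) * θ + n * θ = (2 * n + 1) * θ by ring,
    show (n + 1) * θ - n * θ = θ by ring]
  calc sin ((2 * n + 1) * θ) * sin θ ≤ |sin ((2 * n + 1) * θ)| * |sin θ| := by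
        rw [← abs_mul]; exact le_abs_self _
    _ ≤ |(2 * n + 1) * θ| * |θ| :=
        mul_le_mul abs_sin_le_abs abs_sin_le_abs (abs_nonneg _) (abs_nonneg _)
    _ = (2 * n + 1) * θ ^ 2 := by
        rw [abs_mul, abs_of_nonneg (by positivity : (0 : ℝ) ≤ 2 * n + 1), mul_assoc,
          abs_mul_abs_self, sq]

theorem mul_sin_le_mul_sin {a b : ℝ} (ha : 0 ≤ a) (hab : a ≤ b) (hb : b ≤ π) :
    a * sin b ≤ b * sin a := by
  rcases ha.eq_or_lt with rfl | ha
  · simp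
  rcases hab.eq_or_lt with rfl | hab
  · rfl
  have hslope := strictConcaveOn_sin_Icc.concaveOn.slope_anti_adjacent
    ⟨le_rfl, pi_pos.le⟩ ⟨ha.trans hab |>.le, hb⟩ ha hab
  rw [sin_zero, sub_zero, sub_zero, div_le_div_iff₀ (sub_pos.2 hab) ha] at hslope
  linarith

theorem nat_mul_sin_succ_mul_sq_le {θ : ℝ} (n : ℕ) (hθ : 0 < θ) (hn : (n + 1) * θ ≤ π) :
    (n * sin ((n + 1) * θ)) ^ 2 ≤ ((n + 1) * sin (n * θ)) ^ 2 := by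
  have hsin : 0 ≤ sin ((n + 1) * θ) := sin_nonneg_of_nonneg_of_le_pi (by positivity) hn
  have h := mul_sin_le_mul_sin (by positivity) (by gcongr; linarith) hn (a := n * θ)
  rw [mul_right_comm, mul_right_comm _ θ] at h
  exact pow_le_pow_left₀ (by positivity) (le_of_mul_le_mul_right h hθ) 2

end Real

/-- for `σ > 0`, `m ≥ 2`, `0 ≤ K ≤ 2m²σ/π²`,
`x j = 1 + 2K sin²(jπ/(2m))` and `w j = 1 + σ j²`, the ratios `w j / x j`
are nondecreasing, i.e. `(w 1, ..., w (m-1))` is subordinate to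
`(x 1, ..., x (m-1))`. -/
theorem stmt19 (σ : ℝ) (hσ : 0 < σ) (m : ℕ) (hm : 2 ≤ m)
    (K : ℝ) (hK0 : 0 ≤ K) (hK : K ≤ 2 * (m : ℝ) ^ 2 * σ / π ^ 2)
    (x w : ℕ → ℝ)
    (hx : ∀ j, x j = 1 + 2 * K * Real.sin (j * π / (2 * m)) ^ 2)
    (hw : ∀ j, w j = 1 + σ * j ^ 2) :
    ∀ j : ℕ, j ≤ m - 2 → w j / x j ≤ w (j + 1) / x (j + 1) := by
  intro j hj
  obtain ⟨θ, hθ_def⟩ : ∃ θ, θ = π / (2 * m) := ⟨_, rfl⟩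
  have hθ : 0 < θ := by rw [hθ_def]; positivity
  have hKθ : 2 * K * θ ^ 2 ≤ σ := by
    calc 2 * K * θ ^ 2 ≤ 2 * (2 * (m : ℝ) ^ 2 * σ / π ^ 2) * θ ^ 2 := by gcongr
      _ = σ := by rw [hθ_def]; field_simp
  have hjθ : ((j : ℝ) + 1) * θ ≤ π := by
    have : (j : ℝ) + 1 ≤ m := by exact_mod_cast (by omega : j + 1 ≤ m)
    calc ((j : ℝ) + 1) * θ ≤ m * θ := by gcongr
      _ ≤ π := by rw [hθ_def]; field_simp; linarith [pi_pos]
  have hx_pos : ∀ t, 0 < 1 + 2 * K * sin t ^ 2 := fun t => by positivity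
  simp only [hx, hw, mul_div_assoc, ← hθ_def, Nat.cast_succ]
  refine one_add_div_one_add_le (hx_pos _) (hx_pos _) ?_ ?_
  · calc 2 * K * sin ((j + 1) * θ) ^ 2 - 2 * K * sin (j * θ) ^ 2
        = 2 * K * (sin ((j + 1) * θ) ^ 2 - sin (j * θ) ^ 2) := by ring
      _ ≤ 2 * K * ((2 * j + 1) * θ ^ 2) := by
        gcongr; exact sin_sq_succ_mul_sub_sin_sq_mul_le j θ
      _ = (2 * j + 1) * (2 * K * θ ^ 2) := by ring
      _ ≤ (2 * j + 1) * σ := by gcongr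
      _ = σ * (j + 1) ^ 2 - σ * j ^ 2 := by ring
  · have h := mul_le_mul_of_nonneg_left (nat_mul_sin_succ_mul_sq_le j hθ hjθ)
      (by positivity : 0 ≤ 2 * K * σ)
    linear_combination h
end
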